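/- arXiv:1911.12943 — 10 statements merged into one kernel-verified Lean document; each statement's English description precedes it below -/
import Mathlib

section
/- Let n be a positive integer and let Ω ⊆ ℝ^{n+1} be a set containing the vector (0,…,0,1). If the closure 𝓘(Ω) is full-dimensional, then 𝓘(Ω) is a polyhedron if and only if the closed conical hull cl cone(Ω) has only finitely many different extreme rays (i.e., finitely many extreme rays up to positive scaling). -/
noncomputable section

/-- The conical hull of a set: all finite nonnegative combinations of its elements. -/
def coneHull {E : Type*} [AddCommMonoid E] [Module ℝ E] (Ω : Set E) : Set E :=
  {y | ∃ (k : ℕ) (c : Fin k → ℝ) (v : Fin k → E),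
    (∀ i, 0 ≤ c i) ∧ (∀ i, v i ∈ Ω) ∧ y = ∑ i, c i • v i}

/-- The cutting-plane closure 𝓘(Ω) of a family Ω ⊆ ℝ^n × ℝ of inequalities. -/
def cutClosure {n : ℕ} (Ω : Set ((Fin n → ℝ) × ℝ)) : Set (Fin n → ℝ) :=
  {x | ∀ p ∈ Ω, ∑ i, p.1 i * x i ≤ p.2}

/-- A polyhedron: intersection of finitely many closed halfspaces. -/
def IsPolyhedron {n : ℕ} (P : Set (Fin n → ℝ)) : Prop :=
  ∃ (k : ℕ) (a : Fin k → (Fin n → ℝ)) (b : Fin k → ℝ),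
    P = {x | ∀ i, ∑ j, a i j * x j ≤ b i}

/-- `r` is an extreme ray of the convex cone `K`. -/
def IsExtremeRay {E : Type*} [AddCommMonoid E] [Module ℝ E] (K : Set E) (r : E) : Prop :=
  r ≠ 0 ∧ r ∈ K ∧ ∀ u v : E, u ∈ K → v ∈ K → r = u + v →
    (∃ c : ℝ, 0 ≤ c ∧ u = c • r) ∧ (∃ c : ℝ, 0 ≤ c ∧ v = c • r)

open Set Finset Filter Topology

namespace CPC

variable {n : ℕ}

abbrev V (n : ℕ) : Type := (Fin n → ℝ) × ℝ

/-- The evaluation pairing `p ↦ α·x - β`. -/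
def ev (x : Fin n → ℝ) : V n →ₗ[ℝ] ℝ where
  toFun p := (∑ i, p.1 i * x i) - p.2
  map_add' p q := by
    simp only [Prod.fst_add, Pi.add_apply, Prod.snd_add, add_mul, Finset.sum_add_distrib]
    ring
  map_smul' c p := by
    simp only [Prod.smul_fst, Prod.smul_snd, Pi.smul_apply, smul_eq_mul, RingHom.id_apply,
      mul_assoc, ← Finset.mul_sum]
    ring

lemma ev_continuous (x : Fin n → ℝ) : Continuous (ev x) :=
  (ev x).continuous_of_finiteDimensional

lemma mem_cutClosure_iff {Ω : Set (V n)} {x : Fin n → ℝ} :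
    x ∈ cutClosure Ω ↔ ∀ p ∈ Ω, ev x p ≤ 0 := by
  unfold cutClosure ev
  simp only [Set.mem_setOf_eq, LinearMap.coe_mk, AddHom.coe_mk, sub_nonpos]

lemma zero_mem_coneHull (Ω : Set (V n)) : (0 : V n) ∈ coneHull Ω :=
  ⟨0, Fin.elim0, Fin.elim0, fun i => i.elim0, fun i => i.elim0, by simp⟩

lemma subset_coneHull (Ω : Set (V n)) : Ω ⊆ coneHull Ω := by
  intro p hp
  exact ⟨1, fun _ => 1, fun _ => p, fun _ => zero_le_one, fun _ => hp, by simp⟩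

lemma coneHull_add {Ω : Set (V n)} {p q : V n} (hp : p ∈ coneHull Ω) (hq : q ∈ coneHull Ω) :
    p + q ∈ coneHull Ω := by
  obtain ⟨k1, c1, v1, hc1, hv1, rfl⟩ := hp
  obtain ⟨k2, c2, v2, hc2, hv2, rfl⟩ := hq
  refine ⟨k1 + k2, Fin.append c1 c2, Fin.append v1 v2, ?_, ?_, ?_⟩
  · intro i
    refine i.addCases (fun j => ?_) (fun j => ?_)
    · rw [Fin.append_left]; exact hc1 j
    · rw [Fin.append_right]; exact hc2 j
  · intro i
    refine i.addCases (fun j => ?_) (fun j => ?_)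
    · rw [Fin.append_left]; exact hv1 j
    · rw [Fin.append_right]; exact hv2 j
  · rw [Fin.sum_univ_add]
    simp [Fin.append_left, Fin.append_right]

lemma coneHull_smul {Ω : Set (V n)} {c : ℝ} (hc : 0 ≤ c) {p : V n} (hp : p ∈ coneHull Ω) :
    c • p ∈ coneHull Ω := by
  obtain ⟨k, d, v, hd, hv, rfl⟩ := hp
  refine ⟨k, fun i => c * d i, v, fun i => mul_nonneg hc (hd i), hv, ?_⟩
  rw [Finset.smul_sum]
  simp [smul_smul]

lemma coneHull_convex (Ω : Set (V n)) : Convex ℝ (coneHull Ω) := by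
  intro p hp q hq a b ha hb _
  exact coneHull_add (coneHull_smul ha hp) (coneHull_smul hb hq)

/-- The cone `K = cl cone Ω`. -/
def Kc (Ω : Set (V n)) : Set (V n) := closure (coneHull Ω)

lemma Kc_closed (Ω : Set (V n)) : IsClosed (Kc Ω) := isClosed_closure

lemma Kc_convex (Ω : Set (V n)) : Convex ℝ (Kc Ω) := (coneHull_convex Ω).closure

lemma zero_mem_Kc (Ω : Set (V n)) : (0 : V n) ∈ Kc Ω :=
  subset_closure (zero_mem_coneHull Ω)

lemma Kc_smul {Ω : Set (V n)} {c : ℝ} (hc : 0 ≤ c) {p : V n} (hp : p ∈ Kc Ω) :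
    c • p ∈ Kc Ω := by
  have : c • p ∈ (fun q => c • q) '' closure (coneHull Ω) := ⟨p, hp, rfl⟩
  have h2 := image_closure_subset_closure_image (f := fun q : V n => c • q)
    (continuous_const_smul c) this
  refine closure_mono ?_ h2
  rintro _ ⟨q, hq, rfl⟩
  exact coneHull_smul hc hq

lemma Kc_add {Ω : Set (V n)} {p q : V n} (hp : p ∈ Kc Ω) (hq : q ∈ Kc Ω) :
    p + q ∈ Kc Ω := by
  have h := Kc_convex Ω hp hq (by norm_num : (0:ℝ) ≤ 1/2) (by norm_num : (0:ℝ) ≤ 1/2)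
    (by norm_num)
  have h2 := Kc_smul (by norm_num : (0:ℝ) ≤ 2) h
  rw [smul_add, smul_smul, smul_smul] at h2
  norm_num at h2
  exact h2

lemma Kc_sum {Ω : Set (V n)} {k : ℕ} {u : Fin k → V n} (hu : ∀ i, u i ∈ Kc Ω) :
    ∑ i, u i ∈ Kc Ω :=
  Finset.sum_induction u (· ∈ Kc Ω) (fun _ _ => Kc_add) (zero_mem_Kc Ω)
    (fun i _ => hu i)

/-- The set of valid inequalities for a set `P ⊆ ℝⁿ`. -/
def validSet (P : Set (Fin n → ℝ)) : Set (V n) := {p | ∀ x ∈ P, ev x p ≤ 0}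

lemma validSet_closed (P : Set (Fin n → ℝ)) : IsClosed (validSet (n := n) P) := by
  have : validSet (n := n) P = ⋂ x ∈ P, {p | ev x p ≤ 0} := by
    ext p; simp [validSet]
  rw [this]
  exact isClosed_biInter fun x _ =>
    isClosed_le (ev_continuous x) continuous_const

lemma Kc_subset_validSet {Ω : Set (V n)} : Kc Ω ⊆ validSet (cutClosure Ω) := by
  refine closure_minimal ?_ (validSet_closed _)
  rintro p ⟨k, c, v, hc, hv, rfl⟩ x hx
  rw [map_sum]
  refine Finset.sum_nonpos fun i _ => ?_
  rw [map_smul]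
  exact smul_nonpos_of_nonneg_of_nonpos (hc i) (mem_cutClosure_iff.mp hx _ (hv i))

lemma sum_mul_const (a b : Fin n → ℝ) (c : ℝ) :
    ∑ i, a i * (c * b i) = c * ∑ i, a i * b i := by
  rw [Finset.mul_sum]
  exact Finset.sum_congr rfl fun i _ => by ring

lemma exists_rep (f : V n →L[ℝ] ℝ) :
    ∃ (w : Fin n → ℝ) (w' : ℝ), ∀ p : V n, f p = (∑ i, p.1 i * w i) + p.2 * w' := by
  refine ⟨fun i => f ((Pi.single i 1 : Fin n → ℝ), (0:ℝ)), f ((0 : Fin n → ℝ), (1:ℝ)), fun p => ?_⟩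
  have hdecomp : p = (∑ i, p.1 i • (((Pi.single i 1 : Fin n → ℝ), (0:ℝ)) : V n))
      + p.2 • (((0 : Fin n → ℝ), (1:ℝ)) : V n) := by
    apply Prod.ext
    · simp only [Prod.fst_add, Prod.fst_sum, Prod.smul_fst, Prod.smul_snd]
      funext j
      simp [Pi.single_apply, mul_ite, Finset.sum_ite_eq]
    · simp only [Prod.snd_add, Prod.snd_sum, Prod.smul_fst, Prod.smul_snd]
      simp
  conv_lhs => rw [hdecomp]
  rw [map_add, map_sum, map_smul, smul_eq_mul]
  congr 1
  exact Finset.sum_congr rfl fun i _ => by rw [map_smul, smul_eq_mul]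

lemma cutClosure_mem_iff {Ω : Set (V n)} {x : Fin n → ℝ} :
    x ∈ cutClosure Ω ↔ ∀ p ∈ Ω, ∑ i, p.1 i * x i ≤ p.2 := Iff.rfl

lemma validSet_subset_Kc {Ω : Set (V n)}
    (hΩ : ((0 : Fin n → ℝ), (1 : ℝ)) ∈ Ω) (hne : (cutClosure Ω).Nonempty) :
    validSet (cutClosure Ω) ⊆ Kc Ω := by
  intro p hp
  by_contra hpK
  obtain ⟨f, u, hKu, hup⟩ :=
    geometric_hahn_banach_closed_point (Kc_convex Ω) (Kc_closed Ω) hpK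
  have hu0 : 0 < u := by have := hKu 0 (zero_mem_Kc Ω); simpa using this
  have hfK : ∀ a ∈ Kc Ω, f a ≤ 0 := by
    intro a ha
    by_contra h
    push_neg at h
    have h2 := hKu (((u + 1) / f a) • a) (Kc_smul (by positivity) ha)
    rw [map_smul, smul_eq_mul, div_mul_cancel₀ _ (ne_of_gt h)] at h2
    linarith
  obtain ⟨w, w', hrep⟩ := exists_rep f
  have hw' : w' ≤ 0 := by
    have := hfK _ (subset_closure (subset_coneHull Ω hΩ))
    rw [hrep] at this
    simpa using this
  have hgen : ∀ q ∈ Ω, (∑ i, q.1 i * w i) + q.2 * w' ≤ 0 := fun q hq => by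
    rw [← hrep]; exact hfK q (subset_closure (subset_coneHull Ω hq))
  have hfp : 0 < (∑ i, p.1 i * w i) + p.2 * w' := by rw [← hrep]; linarith
  have hvalid : ∀ x ∈ cutClosure Ω, (∑ i, p.1 i * x i) ≤ p.2 := by
    intro x hx
    have := hp x hx
    unfold ev at this
    simp only [LinearMap.coe_mk, AddHom.coe_mk, sub_nonpos] at this
    exact this
  rcases lt_or_eq_of_le hw' with hlt | heq
  · -- w' < 0
    have hnw : 0 < -w' := by linarith
    set x : Fin n → ℝ := fun i => (-w')⁻¹ * w i with hxdef
    have hx : x ∈ cutClosure Ω := by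
      intro q hq
      have hq2 := hgen q hq
      have : ∑ i, q.1 i * x i = (-w')⁻¹ * ∑ i, q.1 i * w i := sum_mul_const q.1 w _
      rw [this, inv_mul_le_iff₀ hnw]
      nlinarith
    have h1 := hvalid x hx
    have h2 : ∑ i, p.1 i * x i = (-w')⁻¹ * ∑ i, p.1 i * w i := sum_mul_const p.1 w _
    rw [h2, inv_mul_le_iff₀ hnw] at h1
    nlinarith
  · -- w' = 0
    obtain ⟨x0, hx0⟩ := hne
    have hQ : ∀ q ∈ Ω, (∑ i, q.1 i * w i) ≤ 0 := by
      intro q hq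
      have := hgen q hq
      rw [heq] at this
      simpa using this
    set A := ∑ i, p.1 i * x0 i with hA
    set Q := ∑ i, p.1 i * w i with hQdef
    have hQpos : 0 < Q := by
      have := hfp; rw [heq] at this; simpa using this
    have hmem : ∀ t : ℝ, 0 ≤ t → (fun i => x0 i + t * w i) ∈ cutClosure Ω := by
      intro t ht q hq
      have e1 : ∑ i, q.1 i * (x0 i + t * w i)
          = (∑ i, q.1 i * x0 i) + t * ∑ i, q.1 i * w i := by
        rw [← sum_mul_const q.1 w t, ← Finset.sum_add_distrib]
        exact Finset.sum_congr rfl fun i _ => by ring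
      rw [e1]
      have := hx0 q hq
      have := hQ q hq
      nlinarith
    have hA0 : A ≤ p.2 := hvalid x0 hx0
    set t := (p.2 - A + 1) / Q with htdef
    have ht : 0 ≤ t := div_nonneg (by linarith) (le_of_lt hQpos)
    have := hvalid _ (hmem t ht)
    have e1 : ∑ i, p.1 i * (x0 i + t * w i) = A + t * Q := by
      rw [hA, hQdef, ← sum_mul_const p.1 w t, ← Finset.sum_add_distrib]
      exact Finset.sum_congr rfl fun i _ => by ring
    rw [e1, htdef, div_mul_cancel₀ _ (ne_of_gt hQpos)] at this
    linarith

lemma Kc_eq_validSet {Ω : Set (V n)}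
    (hΩ : ((0 : Fin n → ℝ), (1 : ℝ)) ∈ Ω) (hne : (cutClosure Ω).Nonempty) :
    Kc Ω = validSet (cutClosure Ω) :=
  le_antisymm Kc_subset_validSet (validSet_subset_Kc hΩ hne)

lemma Kc_pointed {Ω : Set (V n)}
    (hΩ : ((0 : Fin n → ℝ), (1 : ℝ)) ∈ Ω)
    (hfull : (interior (cutClosure Ω)).Nonempty) :
    ∀ p ∈ Kc Ω, -p ∈ Kc Ω → p = 0 := by
  obtain ⟨x0, hx0i⟩ := hfull
  have hne : (cutClosure Ω).Nonempty := ⟨x0, interior_subset hx0i⟩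
  intro p hpK hnpK
  rw [Kc_eq_validSet hΩ hne] at hpK hnpK
  have heq : ∀ x ∈ cutClosure Ω, ∑ i, p.1 i * x i = p.2 := by
    intro x hx
    have h1 := hpK x hx
    have h2 := hnpK x hx
    unfold ev at h1 h2
    simp only [LinearMap.coe_mk, AddHom.coe_mk, sub_nonpos, Prod.fst_neg, Prod.snd_neg,
      Pi.neg_apply, neg_mul, Finset.sum_neg_distrib, neg_le, neg_neg] at h1 h2
    linarith
  obtain ⟨ε, hε, hball⟩ := Metric.mem_nhds_iff.mp (mem_interior_iff_mem_nhds.mp hx0i)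
  have hfst : p.1 = 0 := by
    funext j
    have hxj : (fun i => x0 i + (ε/2) * (Pi.single j 1 : Fin n → ℝ) i) ∈ cutClosure Ω := by
      apply hball
      rw [Metric.mem_ball]
      have : (fun i => x0 i + (ε/2) * (Pi.single j 1 : Fin n → ℝ) i) = x0 + (ε/2) • (Pi.single j 1 : Fin n → ℝ) := by
        funext i; simp [mul_comm]
      rw [this, dist_eq_norm, add_sub_cancel_left, norm_smul]
      have h1 : ‖(Pi.single j 1 : Fin n → ℝ)‖ ≤ 1 := by
        rw [pi_norm_le_iff_of_nonneg zero_le_one]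
        intro i
        rcases eq_or_ne i j with rfl | h
        · simp
        · simp [Pi.single_apply, h]
      have h2 : ‖ε/2‖ = ε/2 := by rw [Real.norm_eq_abs, abs_of_pos (by linarith)]
      nlinarith
    have e1 := heq _ hxj
    have e0 := heq x0 (interior_subset hx0i)
    have e2 : ∑ i, p.1 i * (x0 i + (ε/2) * (Pi.single j 1 : Fin n → ℝ) i)
        = (∑ i, p.1 i * x0 i) + (ε/2) * p.1 j := by
      have : ∀ i ∈ Finset.univ, p.1 i * (x0 i + (ε/2) * (Pi.single j 1 : Fin n → ℝ) i)
          = p.1 i * x0 i + (ε/2) * (p.1 i * (Pi.single j 1 : Fin n → ℝ) i) := fun i _ => by ring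
      rw [Finset.sum_congr rfl this, Finset.sum_add_distrib, ← Finset.mul_sum]
      congr 2
      simp [Pi.single_apply, mul_ite, Finset.sum_ite_eq]
    rw [e2, e0] at e1
    have : (ε/2) * p.1 j = 0 := by linarith
    have hε2 : (ε/2) ≠ 0 := by positivity
    simpa [hε2] using this
  have e0 := heq x0 (interior_subset hx0i)
  rw [hfst] at e0
  simp only [Pi.zero_apply, zero_mul, Finset.sum_const_zero] at e0
  have : p = (p.1, p.2) := rfl
  rw [this, hfst, ← e0]
  rfl

lemma exists_pos_functional {Ω : Set (V n)}
    (hΩ : ((0 : Fin n → ℝ), (1 : ℝ)) ∈ Ω)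
    (hfull : (interior (cutClosure Ω)).Nonempty) :
    ∃ f : V n →L[ℝ] ℝ, (∀ p ∈ Kc Ω, 0 ≤ f p) ∧ (∀ p ∈ Kc Ω, p ≠ 0 → 0 < f p) := by
  classical
  set S : Set (V n) := Kc Ω ∩ Metric.sphere 0 1 with hSdef
  have hScomp : IsCompact S := (isCompact_sphere (0 : V n) 1).inter_left (Kc_closed Ω)
  have hsep : ∀ x : V n, x ∈ S → ∃ f : V n →L[ℝ] ℝ,
      (∀ b ∈ Kc Ω, 0 ≤ f b) ∧ 0 < f x := by
    intro x hx
    have hxK : x ∈ Kc Ω := hx.1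
    have hxn : ‖x‖ = 1 := by simpa using hx.2
    have hnx : -x ∉ Kc Ω := by
      intro h
      have := Kc_pointed hΩ hfull x hxK h
      rw [this] at hxn
      simp at hxn
    obtain ⟨f, u, hfu, hKf⟩ :=
      geometric_hahn_banach_point_closed (Kc_convex Ω) (Kc_closed Ω) hnx
    have hu0 : u < 0 := by have := hKf 0 (zero_mem_Kc Ω); simpa using this
    have hfpos : ∀ b ∈ Kc Ω, 0 ≤ f b := by
      intro b hb
      by_contra h
      push_neg at h
      have h2 := hKf (((u - 1) / f b) • b)
        (Kc_smul (le_of_lt (div_pos_of_neg_of_neg (by linarith) h)) hb)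
      rw [map_smul, smul_eq_mul, div_mul_cancel₀ _ (ne_of_lt h)] at h2
      linarith
    refine ⟨f, hfpos, ?_⟩
    rw [map_neg] at hfu
    linarith
  choose! F hF1 hF2 using hsep
  have hcover : S ⊆ ⋃ x ∈ S, {z | 0 < F x z} := by
    intro x hx
    exact Set.mem_biUnion hx (hF2 x hx)
  obtain ⟨b', hb'S, hb'fin, hb'cov⟩ := hScomp.elim_finite_subcover_image
    (fun x _ => isOpen_lt continuous_const (F x).continuous) hcover
  refine ⟨∑ x ∈ hb'fin.toFinset, F x, ?_, ?_⟩
  · intro p hp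
    rw [ContinuousLinearMap.coe_sum', Finset.sum_apply]
    exact Finset.sum_nonneg fun x hx =>
      hF1 x (hb'S (hb'fin.mem_toFinset.mp hx)) p hp
  · intro p hpK hp0
    have hnorm : ‖p‖ ≠ 0 := norm_ne_zero_iff.mpr hp0
    set z := ‖p‖⁻¹ • p with hz
    have hzK : z ∈ Kc Ω := Kc_smul (by positivity) hpK
    have hzS : z ∈ S := by
      constructor
      · exact hzK
      · simp only [Metric.mem_sphere, dist_zero_right, hz, norm_smul, norm_inv, norm_norm]
        field_simp
    have hzcov := hb'cov hzS
    rw [Set.mem_iUnion₂] at hzcov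
    obtain ⟨x0, hx0b, hx0pos⟩ := hzcov
    have hfz : 0 < (∑ x ∈ hb'fin.toFinset, F x) z := by
      rw [ContinuousLinearMap.coe_sum', Finset.sum_apply]
      refine Finset.sum_pos' (fun x hx => hF1 x (hb'S (hb'fin.mem_toFinset.mp hx)) z hzK) ?_
      exact ⟨x0, hb'fin.mem_toFinset.mpr hx0b, hx0pos⟩
    have : p = ‖p‖ • z := by rw [hz, smul_smul, mul_inv_cancel₀ hnorm, one_smul]
    rw [this, map_smul, smul_eq_mul]
    have : 0 < ‖p‖ := norm_pos_iff.mpr hp0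
    nlinarith

lemma extremeRay_sum {K : Set (V n)} (hadd : ∀ u v : V n, u ∈ K → v ∈ K → u + v ∈ K)
    (h0 : (0 : V n) ∈ K) {r : V n} (hr : IsExtremeRay K r)
    {k : ℕ} {u : Fin k → V n} (hu : ∀ i, u i ∈ K) (hsum : r = ∑ i, u i) :
    ∀ j, ∃ c : ℝ, 0 ≤ c ∧ u j = c • r := by
  intro j
  classical
  have hrest : ∑ i ∈ Finset.univ.erase j, u i ∈ K :=
    Finset.sum_induction u (· ∈ K) hadd h0 (fun i _ => hu i)
  have hsplit : r = u j + ∑ i ∈ Finset.univ.erase j, u i := by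
    rw [hsum]
    exact (Finset.add_sum_erase _ u (Finset.mem_univ j)).symm
  exact (hr.2.2 (u j) _ (hu j) hrest hsplit).1

lemma coneHull_range_eq {k : ℕ} (g : Fin k → V n) :
    coneHull (Set.range g) =
      {y | ∃ c : Fin k → ℝ, (∀ i, 0 ≤ c i) ∧ y = ∑ i, c i • g i} := by
  classical
  ext y
  constructor
  · rintro ⟨m, c, v, hc, hv, rfl⟩
    choose φ hφ using hv
    refine ⟨fun i => ∑ j ∈ Finset.univ.filter (fun j => φ j = i), c j,
      fun i => Finset.sum_nonneg fun j _ => hc j, ?_⟩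
    have h1 : ∀ j, c j • v j = c j • g (φ j) := fun j => by rw [hφ j]
    rw [Finset.sum_congr rfl fun j _ => h1 j]
    rw [← Finset.sum_fiberwise_of_maps_to (g := φ) (fun j _ => Finset.mem_univ (φ j))
      (fun j => c j • g (φ j))]
    refine Finset.sum_congr rfl fun i _ => ?_
    rw [Finset.sum_smul]
    refine Finset.sum_congr rfl fun j hj => ?_
    rw [(Finset.mem_filter.mp hj).2]
  · rintro ⟨c, hc, rfl⟩
    exact ⟨k, c, g, hc, fun i => Set.mem_range_self i, rfl⟩

lemma extremeRay_rep {Ω : Set (V n)}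
    (hΩ : ((0 : Fin n → ℝ), (1 : ℝ)) ∈ Ω)
    (hfull : (interior (cutClosure Ω)).Nonempty)
    {k : ℕ} (g : Fin k → V n) (hKeq : Kc Ω = Kc (Set.range g)) :
    ∀ r, IsExtremeRay (Kc Ω) r → ∃ i, ∃ c : ℝ, 0 < c ∧ r = c • g i := by
  classical
  obtain ⟨f, hf0, hfpos⟩ := exists_pos_functional hΩ hfull
  intro r hr
  have hrK : r ∈ Kc Ω := hr.2.1
  have hrK' : r ∈ closure (coneHull (Set.range g)) := by
    have : r ∈ Kc (Set.range g) := by rw [← hKeq]; exact hrK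
    exact this
  obtain ⟨y, hy, hytend⟩ := mem_closure_iff_seq_limit.mp hrK'
  have hrep : ∀ m, ∃ c : Fin k → ℝ, (∀ i, 0 ≤ c i) ∧ y m = ∑ i, c i • g i := by
    intro m
    have := hy m
    rw [coneHull_range_eq] at this
    exact this
  choose c hc hyc using hrep
  have hgK : ∀ i, g i ∈ Kc Ω := fun i => by
    rw [hKeq]
    exact subset_closure (subset_coneHull _ (Set.mem_range_self i))
  -- bounded coefficients
  have hfy : Filter.Tendsto (fun m => f (y m)) atTop (𝓝 (f r)) :=
    (f.continuous.tendsto r).comp hytend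
  obtain ⟨Cb, hCb⟩ := hfy.bddAbove_range
  have hCb' : ∀ m, f (y m) ≤ Cb := fun m => hCb (Set.mem_range_self m)
  set d : ℕ → Fin k → ℝ := fun m i => if g i = 0 then 0 else c m i with hd
  have hyd : ∀ m, y m = ∑ i, d m i • g i := by
    intro m
    rw [hyc m]
    refine Finset.sum_congr rfl fun i _ => ?_
    by_cases h : g i = 0
    · simp [hd, h]
    · simp [hd, h]
  set M : Fin k → ℝ := fun i => if h : g i = 0 then 0 else Cb / f (g i) with hM
  have hdM : ∀ m, d m ∈ Set.Icc (0 : Fin k → ℝ) M := by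
    intro m
    constructor
    · intro i
      by_cases h : g i = 0 <;> simp [hd, h, hc m i]
    · intro i
      by_cases h : g i = 0
      · simp [hd, hM, h]
      · have hfgi : 0 < f (g i) := hfpos _ (hgK i) h
        have hsum : f (y m) = ∑ j, c m j * f (g j) := by
          rw [hyc m, map_sum]
          exact Finset.sum_congr rfl fun j _ => by rw [map_smul, smul_eq_mul]
        have hle : c m i * f (g i) ≤ f (y m) := by
          rw [hsum]
          exact Finset.single_le_sum
            (fun j _ => mul_nonneg (hc m j) (hf0 _ (hgK j))) (Finset.mem_univ i)
        have : c m i ≤ Cb / f (g i) := by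
          rw [le_div_iff₀ hfgi]
          exact hle.trans (hCb' m)
        simpa [hd, hM, h] using this
  obtain ⟨cl, hclIcc, φ, hφmono, hφtend⟩ :=
    (isCompact_Icc (a := (0 : Fin k → ℝ)) (b := M)).tendsto_subseq hdM
  have hΦcont : Continuous (fun c : Fin k → ℝ => ∑ i, c i • g i) :=
    continuous_finset_sum _ fun i _ => (continuous_apply i).smul continuous_const
  have hlim1 : Filter.Tendsto (fun m => ∑ i, d (φ m) i • g i) atTop
      (𝓝 (∑ i, cl i • g i)) := (hΦcont.tendsto cl).comp hφtend
  have hlim2 : Filter.Tendsto (fun m => y (φ m)) atTop (𝓝 r) :=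
    hytend.comp (hφmono.tendsto_atTop)
  have hreq : r = ∑ i, cl i • g i := by
    refine tendsto_nhds_unique hlim2 ?_
    convert hlim1 using 2 with m
    exact hyd (φ m)
  have hcl0 : ∀ i, 0 ≤ cl i := fun i => hclIcc.1 i
  have htermK : ∀ i, cl i • g i ∈ Kc Ω := fun i => Kc_smul (hcl0 i) (hgK i)
  have hext := extremeRay_sum (fun u v hu hv => Kc_add hu hv) (zero_mem_Kc Ω) hr htermK hreq
  choose e he0 hee using hext
  have hsume : (∑ i, e i) = 1 := by
    have h1 : r = (∑ i, e i) • r := by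
      conv_lhs => rw [hreq]
      rw [Finset.sum_smul]
      exact Finset.sum_congr rfl fun i _ => hee i
    have h2 : ((∑ i, e i) - 1) • r = 0 := by
      rw [sub_smul, one_smul, ← h1, sub_self]
    rcases smul_eq_zero.mp h2 with h | h
    · linarith [sub_eq_zero.mp h]
    · exact absurd h hr.1
  have hj : ∃ j, 0 < e j := by
    by_contra h
    push_neg at h
    have : (∑ i, e i) ≤ 0 := Finset.sum_nonpos fun i _ => h i
    linarith
  obtain ⟨j, hj⟩ := hj
  refine ⟨j, (e j)⁻¹ * cl j, ?_, ?_⟩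
  · have hclj : 0 < cl j := by
      rcases lt_or_eq_of_le (hcl0 j) with h | h
      · exact h
      · exfalso
        have := hee j
        rw [← h, zero_smul] at this
        have : r = 0 := by
          have h2 := this.symm
          rcases smul_eq_zero.mp h2 with h' | h'
          · exact absurd h' (ne_of_gt hj)
          · exact h'
        exact hr.1 this
    positivity
  · have := hee j
    have h2 : r = (e j)⁻¹ • (cl j • g j) := by
      rw [this, smul_smul, inv_mul_cancel₀ (ne_of_gt hj), one_smul]
    rw [h2, smul_smul]

lemma ev_le_zero_iff (x : Fin n → ℝ) (p : V n) :
    ev x p ≤ 0 ↔ ∑ i, p.1 i * x i ≤ p.2 := by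
  unfold ev
  simp only [LinearMap.coe_mk, AddHom.coe_mk, sub_nonpos]

lemma forward_dir {Ω : Set (V n)}
    (hΩ : ((0 : Fin n → ℝ), (1 : ℝ)) ∈ Ω)
    (hfull : (interior (cutClosure Ω)).Nonempty)
    (hpoly : IsPolyhedron (cutClosure Ω)) :
    ∃ F : Set (V n), F.Finite ∧
      ∀ r, IsExtremeRay (Kc Ω) r → ∃ s ∈ F, ∃ c : ℝ, 0 < c ∧ r = c • s := by
  obtain ⟨k, a, b, hP⟩ := hpoly
  set g : Fin (k + 1) → V n :=
    Fin.cons (((0 : Fin n → ℝ), (1 : ℝ)) : V n) (fun i => (a i, b i)) with hg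
  have hcc : cutClosure (Set.range g) = cutClosure Ω := by
    ext x
    constructor
    · intro h
      rw [hP]
      intro i
      have := h (g i.succ) (Set.mem_range_self _)
      simpa [hg, Fin.cons_succ] using this
    · rintro h p ⟨i, rfl⟩
      induction i using Fin.cases with
      | zero => simp [hg, Fin.cons_zero, cutClosure]
      | succ i =>
        rw [hP] at h
        simpa [hg, Fin.cons_succ] using h i
  have hne : (cutClosure Ω).Nonempty := hfull.mono interior_subset
  have hne' : (cutClosure (Set.range g)).Nonempty := by rw [hcc]; exact hne
  have h0g : (((0 : Fin n → ℝ), (1 : ℝ)) : V n) ∈ Set.range g :=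
    ⟨0, by simp [hg, Fin.cons_zero]⟩
  have hKeq : Kc Ω = Kc (Set.range g) := by
    rw [Kc_eq_validSet hΩ hne, Kc_eq_validSet h0g hne', hcc]
  refine ⟨Set.range g, Set.finite_range g, fun r hr => ?_⟩
  obtain ⟨i, c, hc, hrc⟩ := extremeRay_rep hΩ hfull g hKeq r hr
  exact ⟨g i, Set.mem_range_self i, c, hc, hrc⟩

lemma backward_dir {Ω : Set (V n)}
    (hΩ : ((0 : Fin n → ℝ), (1 : ℝ)) ∈ Ω)
    (hfull : (interior (cutClosure Ω)).Nonempty)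
    (F : Set (V n)) (hFfin : F.Finite)
    (hray : ∀ r, IsExtremeRay (Kc Ω) r → ∃ s ∈ F, ∃ c : ℝ, 0 < c ∧ r = c • s) :
    IsPolyhedron (cutClosure Ω) := by
  classical
  have hne : (cutClosure Ω).Nonempty := hfull.mono interior_subset
  obtain ⟨f, hf0, hfpos⟩ := exists_pos_functional hΩ hfull
  set B : Set (V n) := Kc Ω ∩ {p | f p = 1} with hB
  have hBconv : Convex ℝ B := by
    intro p hp q hq a b ha hb hab
    refine ⟨Kc_convex Ω hp.1 hq.1 ha hb hab, ?_⟩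
    have : f (a • p + b • q) = a * f p + b * f q := by
      rw [map_add, map_smul, map_smul, smul_eq_mul, smul_eq_mul]
    simp only [Set.mem_setOf_eq] at hp hq ⊢
    rw [this, hp.2, hq.2]
    ring_nf
    linarith
  have hBclosed : IsClosed B :=
    (Kc_closed Ω).inter (isClosed_eq f.continuous continuous_const)
  -- compactness of B
  set S : Set (V n) := Kc Ω ∩ Metric.sphere 0 1 with hS
  have hScomp : IsCompact S := (isCompact_sphere (0 : V n) 1).inter_left (Kc_closed Ω)
  have hp0K : (((0 : Fin n → ℝ), (1 : ℝ)) : V n) ∈ Kc Ω :=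
    subset_closure (subset_coneHull Ω hΩ)
  have hp0ne : (((0 : Fin n → ℝ), (1 : ℝ)) : V n) ≠ 0 := by
    intro h
    have := congrArg Prod.snd h
    simpa using this
  have hSne : S.Nonempty := by
    refine ⟨‖(((0 : Fin n → ℝ), (1 : ℝ)) : V n)‖⁻¹ • (((0 : Fin n → ℝ), (1 : ℝ)) : V n), ?_, ?_⟩
    · exact Kc_smul (by positivity) hp0K
    · have hnz : ‖(((0 : Fin n → ℝ), (1 : ℝ)) : V n)‖ ≠ 0 := norm_ne_zero_iff.mpr hp0ne
      simp only [Metric.mem_sphere, dist_zero_right, norm_smul, norm_inv, norm_norm]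
      field_simp
  obtain ⟨xm, hxmS, hxmmin⟩ := hScomp.exists_isMinOn hSne f.continuous.continuousOn
  have hxmne : xm ≠ 0 := by
    intro h
    have := hxmS.2
    rw [h] at this
    simp at this
  set μ := f xm with hμ
  have hμpos : 0 < μ := hfpos xm hxmS.1 hxmne
  have hBsub : B ⊆ Metric.closedBall 0 μ⁻¹ := by
    intro p hp
    have hp1 : f p = 1 := hp.2
    have hpne : p ≠ 0 := by
      intro h
      rw [h] at hp1
      simp at hp1
    have hnz : ‖p‖ ≠ 0 := norm_ne_zero_iff.mpr hpne
    have hzS : ‖p‖⁻¹ • p ∈ S := by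
      refine ⟨Kc_smul (by positivity) hp.1, ?_⟩
      simp only [Metric.mem_sphere, dist_zero_right, norm_smul, norm_inv, norm_norm]
      field_simp
    have hmin := hxmmin hzS
    have : μ ≤ f (‖p‖⁻¹ • p) := hmin
    rw [map_smul, smul_eq_mul] at this
    have hnp : 0 < ‖p‖ := norm_pos_iff.mpr hpne
    have h2 : μ * ‖p‖ ≤ f p := by
      rw [inv_mul_eq_div, le_div_iff₀ hnp] at this
      linarith [this]
    rw [hp1] at h2
    rw [Metric.mem_closedBall, dist_zero_right, ← mul_le_mul_iff_right₀ hμpos,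
      mul_inv_cancel₀ (ne_of_gt hμpos)]
    exact h2
  have hBcomp : IsCompact B :=
    (isCompact_closedBall (0 : V n) μ⁻¹).of_isClosed_subset hBclosed hBsub
  -- extreme points of B are extreme rays of Kc Ω
  set E : Set (V n) := B.extremePoints ℝ with hE
  have hEB : E ⊆ B := extremePoints_subset
  have hEray : ∀ e ∈ E, IsExtremeRay (Kc Ω) e := by
    intro e he
    obtain ⟨⟨heK, hef⟩, hext⟩ := mem_extremePoints.mp he
    have hene : e ≠ 0 := by
      intro h
      rw [h] at hef
      simp at hef
    refine ⟨hene, heK, fun u v hu hv huv => ?_⟩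
    have hfe : f u + f v = 1 := by rw [← map_add, ← huv, hef]
    have hfu : 0 ≤ f u := hf0 u hu
    have hfv : 0 ≤ f v := hf0 v hv
    rcases eq_or_lt_of_le hfu with h0u | h0u
    · -- f u = 0 hence u = 0
      have hu0 : u = 0 := by
        by_contra h
        exact absurd h0u.symm (ne_of_gt (hfpos u hu h))
      have hv0 : v = e := by rw [huv, hu0, zero_add]
      exact ⟨⟨0, le_refl 0, by rw [hu0, zero_smul]⟩, ⟨1, zero_le_one, by rw [hv0, one_smul]⟩⟩
    rcases eq_or_lt_of_le hfv with h0v | h0v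
    · have hv0 : v = 0 := by
        by_contra h
        exact absurd h0v.symm (ne_of_gt (hfpos v hv h))
      have hu0 : u = e := by rw [huv, hv0, add_zero]
      exact ⟨⟨1, zero_le_one, by rw [hu0, one_smul]⟩, ⟨0, le_refl 0, by rw [hv0, zero_smul]⟩⟩
    · -- both positive
      set u' := (f u)⁻¹ • u with hu'
      set v' := (f v)⁻¹ • v with hv'
      have hu'B : u' ∈ B := by
        refine ⟨Kc_smul (le_of_lt (inv_pos.mpr h0u)) hu, ?_⟩
        show f u' = 1
        rw [hu', map_smul, smul_eq_mul]
        exact inv_mul_cancel₀ (ne_of_gt h0u)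
      have hv'B : v' ∈ B := by
        refine ⟨Kc_smul (le_of_lt (inv_pos.mpr h0v)) hv, ?_⟩
        show f v' = 1
        rw [hv', map_smul, smul_eq_mul]
        exact inv_mul_cancel₀ (ne_of_gt h0v)
      have hseg : e ∈ openSegment ℝ u' v' := by
        refine ⟨f u, f v, h0u, h0v, hfe, ?_⟩
        rw [hu', hv', smul_smul, smul_smul, mul_inv_cancel₀ (ne_of_gt h0u),
          mul_inv_cancel₀ (ne_of_gt h0v), one_smul, one_smul, huv]
      obtain ⟨heu, hev⟩ := hext u' hu'B v' hv'B hseg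
      constructor
      · refine ⟨f u, hfu, ?_⟩
        rw [← heu, hu', smul_smul, mul_inv_cancel₀ (ne_of_gt h0u), one_smul]
      · refine ⟨f v, hfv, ?_⟩
        rw [← hev, hv', smul_smul, mul_inv_cancel₀ (ne_of_gt h0v), one_smul]
  -- E is finite
  have hEfin : E.Finite := by
    refine Set.Finite.subset (hFfin.image (fun s => (f s)⁻¹ • s)) ?_
    intro e he
    obtain ⟨s, hsF, c, hc, hesc⟩ := hray e (hEray e he)
    have hef : f e = 1 := (hEB he).2
    have hfs : c * f s = 1 := by
      rw [hesc, map_smul, smul_eq_mul] at hef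
      exact hef
    have hfsne : f s ≠ 0 := by
      intro h
      rw [h, mul_zero] at hfs
      norm_num at hfs
    have hcinv : c = (f s)⁻¹ := by field_simp at hfs ⊢; linarith
    exact ⟨s, hsF, by show (f s)⁻¹ • s = e; rw [← hcinv]; exact hesc.symm⟩
  -- Krein-Milman
  have hKM : closure (convexHull ℝ E) = B := closure_convexHull_extremePoints hBcomp hBconv
  have hBhull : convexHull ℝ E = B := by
    rw [← hKM, (hEfin.isClosed_convexHull (𝕜 := ℝ)).closure_eq]
  -- enumerate E
  set k := hEfin.toFinset.card with hk
  set eqv := hEfin.toFinset.equivFin with heqv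
  set g : Fin k → V n := fun i => (eqv.symm i : V n) with hg
  have hgE : ∀ i, g i ∈ E := fun i => hEfin.mem_toFinset.mp (eqv.symm i).2
  have hrangeg : Set.range g = E := by
    ext p
    constructor
    · rintro ⟨i, rfl⟩
      exact hgE i
    · intro hp
      exact ⟨eqv ⟨p, hEfin.mem_toFinset.mpr hp⟩, by simp [hg]⟩
  refine ⟨k, fun i => (g i).1, fun i => (g i).2, ?_⟩
  ext x
  constructor
  · intro hx i
    have hgK : g i ∈ Kc Ω := (hEB (hgE i)).1
    rw [Kc_eq_validSet hΩ hne] at hgK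
    exact (ev_le_zero_iff x (g i)).mp (hgK x hx)
  · intro hx
    intro p hp
    have hpK : p ∈ Kc Ω := subset_closure (subset_coneHull Ω hp)
    by_cases hp0 : p = 0
    · rw [hp0]
      simp
    · have hfp : 0 < f p := hfpos p hpK hp0
      set bp := (f p)⁻¹ • p with hbp
      have hbpB : bp ∈ B := by
        refine ⟨Kc_smul (le_of_lt (inv_pos.mpr hfp)) hpK, ?_⟩
        show f bp = 1
        rw [hbp, map_smul, smul_eq_mul]
        exact inv_mul_cancel₀ (ne_of_gt hfp)
      rw [← hBhull, _root_.convexHull_eq] at hbpB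
      obtain ⟨ι, t, w, z, hw0, hw1, hzE, hcm⟩ := hbpB
      have hcm' : bp = ∑ i ∈ t, w i • z i := by
        rw [← hcm, Finset.centerMass_eq_of_sum_1 _ _ hw1]
      have hevbp : ev x bp ≤ 0 := by
        rw [hcm', map_sum]
        refine Finset.sum_nonpos fun i hi => ?_
        rw [map_smul, smul_eq_mul]
        refine mul_nonpos_of_nonneg_of_nonpos (hw0 i hi) ?_
        have hz : z i ∈ E := hzE i hi
        rw [← hrangeg] at hz
        obtain ⟨j, hj⟩ := hz
        rw [← hj]
        exact (ev_le_zero_iff x (g j)).mpr (hx j)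
      have hpe : p = (f p) • bp := by
        rw [hbp, smul_smul, mul_inv_cancel₀ (ne_of_gt hfp), one_smul]
      have : ev x p ≤ 0 := by
        rw [hpe, map_smul, smul_eq_mul]
        exact mul_nonpos_of_nonneg_of_nonpos (le_of_lt hfp) hevbp
      exact (ev_le_zero_iff x p).mp this

end CPC

/-- Theorem: if 𝓘(Ω) is full-dimensional, then 𝓘(Ω) is polyhedral iff
cl cone(Ω) has finitely many different extreme rays (up to positive scaling). -/
theorem closure_polyhedral_iff_finitely_many_extreme_rays
    {n : ℕ} (hn : 0 < n) (Ω : Set ((Fin n → ℝ) × ℝ))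
    (hΩ : ((0 : Fin n → ℝ), (1 : ℝ)) ∈ Ω)
    (hfull : (interior (cutClosure Ω)).Nonempty) :
    IsPolyhedron (cutClosure Ω) ↔
      ∃ F : Set ((Fin n → ℝ) × ℝ), F.Finite ∧
        ∀ r, IsExtremeRay (closure (coneHull Ω)) r →
          ∃ s ∈ F, ∃ c : ℝ, 0 < c ∧ r = c • s := by
  constructor
  · intro hpoly
    obtain ⟨F, hF, h⟩ := CPC.forward_dir hΩ hfull hpoly
    exact ⟨F, hF, fun r hr => h r hr⟩
  · rintro ⟨F, hF, h⟩
    exact CPC.backward_dir hΩ hfull F hF (fun r hr => h r hr)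
end
end

section
/- Let Ω ⊆ ℝ^{n+1} contain (0,…,0,1) and suppose the closure 𝓘(Ω) is nonempty. Then for α ∈ ℝ^n and β ∈ ℝ, the inequality α·x ≤ β is valid for 𝓘(Ω) (i.e., 𝓘(Ω) ⊆ {x ∈ ℝ^n : α·x ≤ β}) if and only if (α, β) ∈ cl cone(Ω). -/
noncomputable section

section Aux
variable {E : Type*} [AddCommMonoid E] [Module ℝ E]

lemma coneHull.zero_mem (Ω : Set E) : (0 : E) ∈ coneHull Ω :=
  ⟨0, fun _ => 0, fun _ => 0, fun i => le_refl 0, fun i => i.elim0, by simp⟩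

lemma coneHull.subset (Ω : Set E) : Ω ⊆ coneHull Ω := fun y hy =>
  ⟨1, fun _ => 1, fun _ => y, fun _ => zero_le_one, fun _ => hy, by simp⟩

lemma coneHull.smul_mem {Ω : Set E} {y : E} (hy : y ∈ coneHull Ω) {t : ℝ} (ht : 0 ≤ t) :
    t • y ∈ coneHull Ω := by
  obtain ⟨k, c, v, hc, hv, rfl⟩ := hy
  refine ⟨k, fun i => t * c i, v, fun i => mul_nonneg ht (hc i), hv, ?_⟩
  rw [Finset.smul_sum]
  simp [smul_smul]

lemma coneHull.add_mem {Ω : Set E} {y z : E} (hy : y ∈ coneHull Ω) (hz : z ∈ coneHull Ω) :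
    y + z ∈ coneHull Ω := by
  obtain ⟨k, c, v, hc, hv, rfl⟩ := hy
  obtain ⟨l, d, w, hd, hw, rfl⟩ := hz
  refine ⟨k + l, Fin.append c d, Fin.append v w, ?_, ?_, ?_⟩
  · intro i
    refine Fin.addCases (fun j => ?_) (fun j => ?_) i <;>
      simp [Fin.append_left, Fin.append_right, hc, hd]
  · intro i
    refine Fin.addCases (fun j => ?_) (fun j => ?_) i <;>
      simp [Fin.append_left, Fin.append_right, hv, hw]
  · rw [Fin.sum_univ_add]
    simp [Fin.append_left, Fin.append_right]

lemma coneHull.convex (Ω : Set E) : Convex ℝ (coneHull Ω) :=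
  fun _ hy _ hz _ _ ha hb _ =>
    coneHull.add_mem (coneHull.smul_mem hy ha) (coneHull.smul_mem hz hb)

end Aux

/-- The evaluation functional `p ↦ ∑ i, p.1 i * x i - p.2`. -/
def evalMap {n : ℕ} (x : Fin n → ℝ) : ((Fin n → ℝ) × ℝ) →ₗ[ℝ] ℝ where
  toFun p := ∑ i, p.1 i * x i - p.2
  map_add' p q := by
    simp [add_mul, Finset.sum_add_distrib]
    ring
  map_smul' t p := by
    simp [Finset.mul_sum, mul_assoc, mul_sub]

/-- Proposition: α·x ≤ β is valid for 𝓘(Ω) iff (α, β) ∈ cl cone(Ω). -/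
theorem valid_iff_mem_cl_cone {n : ℕ} (Ω : Set ((Fin n → ℝ) × ℝ))
    (hΩ : ((0 : Fin n → ℝ), (1 : ℝ)) ∈ Ω)
    (hne : (cutClosure Ω).Nonempty) (α : Fin n → ℝ) (β : ℝ) :
    (cutClosure Ω ⊆ {x | ∑ i, α i * x i ≤ β}) ↔ (α, β) ∈ closure (coneHull Ω) := by
  constructor
  · -- validity → membership, by contradiction via separation
    intro hvalid
    by_contra hmem
    obtain ⟨f, u, hsep, hu⟩ := geometric_hahn_banach_closed_point
      ((coneHull.convex Ω).closure) isClosed_closure hmem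
    have hu0 : (0 : ℝ) < u := by
      have := hsep 0 (subset_closure (coneHull.zero_mem Ω))
      simpa using this
    -- f is ≤ 0 on the cone hull
    have hfle : ∀ y ∈ coneHull Ω, f y ≤ 0 := by
      intro y hy
      by_contra h
      push_neg at h
      have ht : (0 : ℝ) ≤ u / f y := le_of_lt (div_pos hu0 h)
      have hmem' : (u / f y) • y ∈ coneHull Ω := coneHull.smul_mem hy ht
      have := hsep _ (subset_closure hmem')
      rw [map_smul, smul_eq_mul, div_mul_cancel₀ _ (ne_of_gt h)] at this
      exact lt_irrefl u this
    -- coordinate representation of f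
    set x₀ : Fin n → ℝ := fun i => f ((Pi.single i 1 : Fin n → ℝ), (0 : ℝ)) with hx₀
    set t₀ : ℝ := f ((0 : Fin n → ℝ), (1 : ℝ)) with ht₀
    have hrep : ∀ p : (Fin n → ℝ) × ℝ, f p = ∑ i, p.1 i * x₀ i + p.2 * t₀ := by
      intro p
      have hdecomp : p = (∑ i, p.1 i • ((Pi.single i 1 : Fin n → ℝ), (0 : ℝ)))
          + p.2 • ((0 : Fin n → ℝ), (1 : ℝ)) := by
        refine Prod.ext ?_ ?_
        · simp only [Prod.fst_add, Prod.fst_sum, Prod.smul_fst, Prod.snd_add]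
          funext j
          simp [Pi.single_apply, Finset.sum_ite_eq]
        · simp [Prod.snd_sum]
      conv_lhs => rw [hdecomp]
      simp only [map_add, map_sum, map_smul, smul_eq_mul]
      rfl
    have hαβ : 0 < ∑ i, α i * x₀ i + β * t₀ := by
      have := hrep (α, β)
      simp only at this
      linarith [hu, hu0, this ▸ hu]
    have hΩle : ∀ p ∈ Ω, ∑ i, p.1 i * x₀ i + p.2 * t₀ ≤ 0 := by
      intro p hp
      rw [← hrep p]
      exact hfle p (coneHull.subset Ω hp)
    have ht₀le : t₀ ≤ 0 := by
      have := hΩle _ hΩ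
      simpa using this
    rcases lt_or_eq_of_le ht₀le with ht₀lt | ht₀eq
    · -- t₀ < 0 : the point x₀ / (-t₀) lies in the cut closure but violates the inequality
      have hpos : (0 : ℝ) < -t₀ := by linarith
      set y : Fin n → ℝ := fun i => x₀ i / (-t₀) with hy
      have hsum : ∀ a : Fin n → ℝ, ∑ i, a i * y i = (∑ i, a i * x₀ i) / (-t₀) := by
        intro a
        rw [Finset.sum_div]
        exact Finset.sum_congr rfl fun i _ => by rw [hy]; ring
      have hyC : y ∈ cutClosure Ω := by
        intro p hp
        rw [hsum]
        rw [div_le_iff₀ hpos]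
        have := hΩle p hp
        nlinarith
      have := hvalid hyC
      simp only [Set.mem_setOf_eq] at this
      rw [hsum, div_le_iff₀ hpos] at this
      nlinarith
    · -- t₀ = 0 : move from a point of the cut closure along x₀
      obtain ⟨z, hz⟩ := hne
      have hSα : 0 < ∑ i, α i * x₀ i := by
        have h := hαβ
        rw [ht₀eq] at h
        simpa using h
      set lam : ℝ := max 0 ((β - ∑ i, α i * z i + 1) / (∑ i, α i * x₀ i)) with hlam
      have hlam0 : 0 ≤ lam := le_max_left _ _
      set w : Fin n → ℝ := fun i => z i + lam * x₀ i with hw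
      have hsum : ∀ a : Fin n → ℝ,
          ∑ i, a i * w i = ∑ i, a i * z i + lam * ∑ i, a i * x₀ i := by
        intro a
        rw [Finset.mul_sum, ← Finset.sum_add_distrib]
        exact Finset.sum_congr rfl fun i _ => by rw [hw]; ring
      have hwC : w ∈ cutClosure Ω := by
        intro p hp
        rw [hsum]
        have h1 : ∑ i, p.1 i * x₀ i ≤ 0 := by
          have h := hΩle p hp
          rw [ht₀eq] at h
          simpa using h
        have h2 := hz p hp
        nlinarith [mul_nonpos_of_nonneg_of_nonpos hlam0 h1]
      have hvw := hvalid hwC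
      simp only [Set.mem_setOf_eq] at hvw
      rw [hsum] at hvw
      have hlamge : (β - ∑ i, α i * z i + 1) / (∑ i, α i * x₀ i) ≤ lam := le_max_right _ _
      rw [div_le_iff₀ hSα] at hlamge
      nlinarith
  · -- membership → validity
    intro hmem x hx
    have hS : IsClosed {p : (Fin n → ℝ) × ℝ | evalMap x p ≤ 0} := by
      have hcont : Continuous (evalMap x) := (evalMap x).continuous_of_finiteDimensional
      exact isClosed_le hcont continuous_const
    have hsub : coneHull Ω ⊆ {p : (Fin n → ℝ) × ℝ | evalMap x p ≤ 0} := by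
      rintro p ⟨k, c, v, hc, hv, rfl⟩
      simp only [Set.mem_setOf_eq, map_sum, map_smul, smul_eq_mul]
      apply Finset.sum_nonpos
      intro i _
      apply mul_nonpos_of_nonneg_of_nonpos (hc i)
      have := hx (v i) (hv i)
      simp only [evalMap, LinearMap.coe_mk, AddHom.coe_mk]
      linarith
    have := closure_minimal hsub hS hmem
    simp only [Set.mem_setOf_eq, evalMap, LinearMap.coe_mk, AddHom.coe_mk] at this
    simp only [Set.mem_setOf_eq]
    linarith
end
end

section
/- Let Ω ⊆ ℝ^{n+1} contain (0,…,0,1) and suppose the closure 𝓘(Ω) is nonempty. Then 𝓘(Ω) is full-dimensional (has nonempty interior in ℝ^n) if and only if cl cone(Ω) is a pointed closed convex cone, i.e., cl cone(Ω) ∩ (−cl cone(Ω)) = {0}. -/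
open Pointwise

noncomputable section

/-!
Both sides say that no nonzero affine equation `α ⬝ᵥ x = β` holds on all of `𝓘(Ω)`.

For the convex set `𝓘(Ω)` this is equivalent to having nonempty interior: its affine span is
everything exactly when no nonzero linear functional is constant on it.

For the cone, `(α, β)` and `-(α, β)` both lie in `cl cone(Ω)` iff both inequalities are valid on
`𝓘(Ω)`, by a Farkas lemma. A point `(α, β)` outside the closed cone is separated from it by a
functional `(a, b) ↦ a ⬝ᵥ y + b t` that is nonnegative on `Ω`, with `t ≥ 0` because
`(0, 1) ∈ Ω`. Then for `z ∈ 𝓘(Ω)` the points `(z - s y) / (1 + s t)`, `s ≥ 0`, stay in `𝓘(Ω)`,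
and for large `s` they violate `α ⬝ᵥ x ≤ β`.
-/

def affineEquations {n : ℕ} (s : Set (Fin n → ℝ)) : Set ((Fin n → ℝ) × ℝ) :=
  {q | ∀ x ∈ s, q.1 ⬝ᵥ x = q.2}

section ConeHull

variable {E : Type*} [AddCommMonoid E] [Module ℝ E]

theorem coneHull_eq_hull (Ω : Set E) : coneHull Ω = PointedCone.hull ℝ Ω := by
  ext y
  simp only [coneHull, Set.mem_ofPred_eq, SetLike.mem_coe, Submodule.mem_span_set']
  constructor
  · rintro ⟨k, c, v, hc, hv, rfl⟩
    exact ⟨k, fun i => ⟨c i, hc i⟩, fun i => ⟨v i, hv i⟩, rfl⟩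
  · rintro ⟨k, c, v, rfl⟩
    exact ⟨k, fun i => c i, fun i => v i, fun i => (c i).2, fun i => (v i).2, rfl⟩

variable [TopologicalSpace E] {Ω : Set E}

theorem map_nonneg_of_mem_closure_coneHull {ℓ : E →ₗ[ℝ] ℝ} (hℓ : Continuous ℓ)
    (hΩ : ∀ p ∈ Ω, 0 ≤ ℓ p) {q : E} (hq : q ∈ closure (coneHull Ω)) : 0 ≤ ℓ q := by
  refine closure_minimal (fun p hp => ?_) (isClosed_le continuous_const hℓ) hq
  obtain ⟨k, c, v, hc, hv, rfl⟩ := hp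
  simp only [Set.mem_ofPred_eq, map_sum, map_smul, smul_eq_mul]
  exact Finset.sum_nonneg fun i _ => mul_nonneg (hc i) (hΩ _ (hv i))

end ConeHull

section Separation

variable {E : Type*} [AddCommGroup E] [Module ℝ E] [TopologicalSpace E] [IsTopologicalAddGroup E]
  [ContinuousSMul ℝ E] [LocallyConvexSpace ℝ E] {Ω : Set E}

theorem exists_dual_nonneg_of_notMem_closure_coneHull {q : E} (hq : q ∉ closure (coneHull Ω)) :
    ∃ f : StrongDual ℝ E, (∀ p ∈ Ω, 0 ≤ f p) ∧ f q < 0 := by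
  rw [coneHull_eq_hull] at hq
  obtain ⟨f, hf, hfq⟩ :=
    ProperCone.hyperplane_separation_point (Submodule.closure (PointedCone.hull ℝ Ω)) hq
  exact ⟨f, fun p hp => hf p (subset_closure (PointedCone.subset_hull hp)), hfq⟩

end Separation

section CutClosure

variable {n : ℕ} {Ω : Set ((Fin n → ℝ) × ℝ)}

theorem mem_cutClosure {x : Fin n → ℝ} : x ∈ cutClosure Ω ↔ ∀ p ∈ Ω, p.1 ⬝ᵥ x ≤ p.2 := Iff.rfl

theorem convex_cutClosure : Convex ℝ (cutClosure Ω) := by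
  intro x hx y hy a b ha hb hab p hp
  calc p.1 ⬝ᵥ (a • x + b • y) = a * p.1 ⬝ᵥ x + b * p.1 ⬝ᵥ y := by
        simp only [dotProduct_add, dotProduct_smul, smul_eq_mul]
    _ ≤ a * p.2 + b * p.2 := by gcongr; exacts [hx p hp, hy p hp]
    _ = p.2 := by rw [← add_mul, hab, one_mul]

theorem le_of_mem_closure_coneHull {q : (Fin n → ℝ) × ℝ} (hq : q ∈ closure (coneHull Ω))
    {x : Fin n → ℝ} (hx : x ∈ cutClosure Ω) : q.1 ⬝ᵥ x ≤ q.2 := by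
  let ℓ : (Fin n → ℝ) × ℝ →ₗ[ℝ] ℝ :=
    LinearMap.snd ℝ _ _ - dotProductEquiv ℝ (Fin n) x ∘ₗ LinearMap.fst ℝ _ _
  have hℓ (p : (Fin n → ℝ) × ℝ) : ℓ p = p.2 - p.1 ⬝ᵥ x := by simp [ℓ, dotProduct_comm]
  have := map_nonneg_of_mem_closure_coneHull (LinearMap.continuous_of_finiteDimensional ℓ)
    (fun p hp => by simpa [hℓ] using mem_cutClosure.1 hx p hp) hq
  simpa [hℓ] using this

theorem exists_apply_eq_dotProduct_add_mul (f : (Fin n → ℝ) × ℝ →ₗ[ℝ] ℝ) :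
    ∃ (y : Fin n → ℝ) (t : ℝ), ∀ a b, f (a, b) = a ⬝ᵥ y + b * t := by
  set g := f ∘ₗ LinearMap.inl ℝ _ _
  refine ⟨(dotProductEquiv ℝ (Fin n)).symm g, f (0, 1), fun a b => ?_⟩
  have hg : (dotProductEquiv ℝ (Fin n)).symm g ⬝ᵥ a = f (a, 0) :=
    LinearMap.congr_fun ((dotProductEquiv ℝ (Fin n)).apply_symm_apply g) a
  have hab : ((a, b) : (Fin n → ℝ) × ℝ) = (a, 0) + b • (0, 1) := by simp
  rw [hab, map_add, map_smul, ← hg, dotProduct_comm, smul_eq_mul]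

theorem inv_smul_sub_smul_mem_cutClosure {y z : Fin n → ℝ} {t s : ℝ} (hz : z ∈ cutClosure Ω)
    (hy : ∀ p ∈ Ω, 0 ≤ p.1 ⬝ᵥ y + p.2 * t) (ht : 0 ≤ t) (hs : 0 ≤ s) :
    (1 + s * t)⁻¹ • (z - s • y) ∈ cutClosure Ω := by
  refine mem_cutClosure.2 fun p hp => ?_
  have h := mul_nonneg hs (hy p hp)
  rw [dotProduct_smul, smul_eq_mul, inv_mul_le_iff₀ (by positivity), dotProduct_sub,
    dotProduct_smul, smul_eq_mul]
  linarith [mem_cutClosure.1 hz p hp]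

theorem mem_closure_coneHull_of_forall_le (hΩ : ((0 : Fin n → ℝ), (1 : ℝ)) ∈ Ω)
    (hne : (cutClosure Ω).Nonempty) {q : (Fin n → ℝ) × ℝ}
    (hq : ∀ x ∈ cutClosure Ω, q.1 ⬝ᵥ x ≤ q.2) : q ∈ closure (coneHull Ω) := by
  by_contra hq'
  obtain ⟨f, hfΩ, hfq⟩ := exists_dual_nonneg_of_notMem_closure_coneHull hq'
  obtain ⟨y, t, hf⟩ := exists_apply_eq_dotProduct_add_mul f.toLinearMap
  simp only [ContinuousLinearMap.coe_coe] at hf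
  obtain ⟨z, hz⟩ := hne
  have ht : 0 ≤ t := by simpa [hf] using hfΩ _ hΩ
  have hfq' : q.1 ⬝ᵥ y + q.2 * t < 0 := by rwa [← hf]
  set s := (q.2 - q.1 ⬝ᵥ z + 1) / -(q.1 ⬝ᵥ y + q.2 * t)
  have hs : 0 ≤ s := div_nonneg (by linarith [hq z hz]) (by linarith)
  have hmem := inv_smul_sub_smul_mem_cutClosure hz (fun p hp => hf p.1 p.2 ▸ hfΩ p hp) ht hs
  have key := hq _ hmem
  rw [dotProduct_smul, smul_eq_mul, inv_mul_le_iff₀ (by positivity), dotProduct_sub,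
    dotProduct_smul, smul_eq_mul] at key
  have hsq : s * -(q.1 ⬝ᵥ y + q.2 * t) = q.2 - q.1 ⬝ᵥ z + 1 :=
    div_mul_cancel₀ _ (neg_pos.2 hfq').ne'
  linarith

theorem mem_closure_coneHull_iff (hΩ : ((0 : Fin n → ℝ), (1 : ℝ)) ∈ Ω)
    (hne : (cutClosure Ω).Nonempty) {q : (Fin n → ℝ) × ℝ} :
    q ∈ closure (coneHull Ω) ↔ ∀ x ∈ cutClosure Ω, q.1 ⬝ᵥ x ≤ q.2 :=
  ⟨fun hq _ hx => le_of_mem_closure_coneHull hq hx, mem_closure_coneHull_of_forall_le hΩ hne⟩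

theorem closure_coneHull_inter_neg (hΩ : ((0 : Fin n → ℝ), (1 : ℝ)) ∈ Ω)
    (hne : (cutClosure Ω).Nonempty) :
    closure (coneHull Ω) ∩ -closure (coneHull Ω) = affineEquations (cutClosure Ω) := by
  ext q
  simp only [Set.mem_inter_iff, Set.mem_neg, mem_closure_coneHull_iff hΩ hne, Prod.fst_neg,
    Prod.snd_neg, neg_dotProduct, neg_le_neg_iff, affineEquations, Set.mem_ofPred_eq, ← forall₂_and]
  exact forall₂_congr fun x _ => le_antisymm_iff.symm

end CutClosure

theorem mem_dualAnnihilator_vectorSpan {k V : Type*} [CommRing k] [AddCommGroup V] [Module k V]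
    {s : Set V} {f : Module.Dual k V} :
    f ∈ (vectorSpan k s).dualAnnihilator ↔ ∀ x ∈ s, ∀ y ∈ s, f x = f y := by
  rw [Submodule.mem_dualAnnihilator, vectorSpan_def]
  change Submodule.span k (s -ᵥ s) ≤ LinearMap.ker f ↔ _
  simp [Submodule.span_le, Set.vsub_subset_iff, sub_eq_zero]

theorem vectorSpan_eq_top_iff_forall_dotProduct {n : ℕ} {s : Set (Fin n → ℝ)} :
    vectorSpan ℝ s = ⊤ ↔ ∀ α : Fin n → ℝ, (∀ x ∈ s, ∀ y ∈ s, α ⬝ᵥ x = α ⬝ᵥ y) → α = 0 := by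
  rw [← Submodule.dualAnnihilator_eq_bot_iff, Submodule.eq_bot_iff,
    (dotProductEquiv ℝ (Fin n)).surjective.forall]
  simp only [mem_dualAnnihilator_vectorSpan, dotProductEquiv_apply_apply,
    LinearEquiv.map_eq_zero_iff]

theorem Convex.interior_nonempty_iff_affineEquations_eq_singleton_zero {n : ℕ}
    {s : Set (Fin n → ℝ)} (hs : Convex ℝ s) (hne : s.Nonempty) :
    (interior s).Nonempty ↔ affineEquations s = {0} := by
  rw [hs.interior_nonempty_iff_affineSpan_eq_top,
    AffineSubspace.affineSpan_eq_top_iff_vectorSpan_eq_top_of_nonempty ℝ _ _ hne,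
    vectorSpan_eq_top_iff_forall_dotProduct]
  obtain ⟨z, hz⟩ := hne
  constructor
  · intro h
    refine Set.eq_singleton_iff_unique_mem.2 ⟨fun x _ => zero_dotProduct x, fun q hq => ?_⟩
    have hα : q.1 = 0 := h q.1 fun x hx y hy => (hq x hx).trans (hq y hy).symm
    have hβ : q.2 = 0 := by rw [← hq z hz, hα, zero_dotProduct]
    exact Prod.ext hα hβ
  · intro h α hα
    have : (α, α ⬝ᵥ z) ∈ ({0} : Set ((Fin n → ℝ) × ℝ)) := h ▸ fun x hx => hα x hx z hz
    exact congrArg Prod.fst this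

/-- Corollary: 𝓘(Ω) is full-dimensional iff cl cone(Ω) is pointed. -/
theorem fullDim_iff_pointed {n : ℕ} (Ω : Set ((Fin n → ℝ) × ℝ))
    (hΩ : ((0 : Fin n → ℝ), (1 : ℝ)) ∈ Ω)
    (hne : (cutClosure Ω).Nonempty) :
    (interior (cutClosure Ω)).Nonempty ↔
      closure (coneHull Ω) ∩ (-(closure (coneHull Ω))) = {0} := by
  rw [closure_coneHull_inter_neg hΩ hne,
    convex_cutClosure.interior_nonempty_iff_affineEquations_eq_singleton_zero hne]
end
end

section
/- Let Ω ⊆ ℝ^m with 0 ∉ Ω, and let h ∈ ℝ^m satisfy h·ω > 0 for every nonzero ω ∈ cl cone(Ω). Define the normalized set Ω' := {ω/(h·ω) : ω ∈ Ω}. Then {x ∈ ℝ^m : h·x = 1} ∩ cl cone(Ω) = cl conv(Ω'). -/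
/-!
With `f = ⟨h, ·⟩`, the closed convex set `{f = 1} ∩ cl cone(Ω)` contains `Ω'`, which gives `⊇`.
Conversely, a nonnegative combination `y = ∑ cᵢ ωᵢ` with `f y > 0` rescales to the convex
combination `y / f y = ∑ (cᵢ f ωᵢ / f y) (ωᵢ / f ωᵢ)` of points of `Ω'`. Near a point `x` of the
slice `f` is close to `1`, so rescaling points of the cone that approximate `x` gives points of
`conv Ω'` converging to `x`.
-/

noncomputable section

section ConeHull

variable {E : Type*} [AddCommMonoid E] [Module ℝ E] {Ω : Set E}

theorem subset_coneHull : Ω ⊆ coneHull Ω := fun ω hω =>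
  ⟨1, fun _ => 1, fun _ => ω, fun _ => zero_le_one, fun _ => hω, by simp⟩

theorem smul_mem_coneHull {a : ℝ} (ha : 0 ≤ a) {y : E} (hy : y ∈ coneHull Ω) :
    a • y ∈ coneHull Ω := by
  obtain ⟨k, c, v, hc, hv, rfl⟩ := hy
  refine ⟨k, fun i => a * c i, v, fun i => mul_nonneg ha (hc i), hv, ?_⟩
  simp only [Finset.smul_sum, smul_smul]

theorem add_mem_coneHull {y z : E} (hy : y ∈ coneHull Ω) (hz : z ∈ coneHull Ω) :
    y + z ∈ coneHull Ω := by
  obtain ⟨k, c, v, hc, hv, rfl⟩ := hy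
  obtain ⟨l, d, w, hd, hw, rfl⟩ := hz
  refine ⟨k + l, Fin.append c d, Fin.append v w, Fin.addCases (by simpa using hc)
    (by simpa using hd), Fin.addCases (by simpa using hv) (by simpa using hw), ?_⟩
  simp [Fin.sum_univ_add]

theorem convex_coneHull : Convex ℝ (coneHull Ω) := fun _ hx _ hy _ _ ha hb _ =>
  add_mem_coneHull (smul_mem_coneHull ha hx) (smul_mem_coneHull hb hy)

end ConeHull

theorem inv_smul_mem_convexHull_of_mem_coneHull {E : Type*} [AddCommGroup E] [Module ℝ E]
    {Ω : Set E} (f : E →ₗ[ℝ] ℝ) (hΩ : ∀ ω ∈ Ω, 0 < f ω) {y : E} (hy : y ∈ coneHull Ω)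
    (hfy : 0 < f y) :
    (f y)⁻¹ • y ∈ convexHull ℝ ((fun ω => (f ω)⁻¹ • ω) '' Ω) := by
  obtain ⟨k, c, v, hc, hv, rfl⟩ := hy
  have hweights : ∑ i, c i * f (v i) = f (∑ i, c i • v i) := by simp
  have hmem := Finset.univ.centerMass_mem_convexHull (w := fun i => c i * f (v i))
    (fun i _ => mul_nonneg (hc i) (hΩ _ (hv i)).le) (hweights ▸ hfy)
    (fun i _ => Set.mem_image_of_mem (fun ω => (f ω)⁻¹ • ω) (hv i))
  rw [Finset.centerMass, hweights] at hmem
  convert hmem using 3 with i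
  rw [smul_smul, mul_assoc, mul_inv_cancel₀ (hΩ _ (hv i)).ne', mul_one]

theorem slice_closure_coneHull_eq_closure_convexHull {E : Type*} [AddCommGroup E] [Module ℝ E]
    [TopologicalSpace E] [IsTopologicalAddGroup E] [ContinuousSMul ℝ E] (f : E →L[ℝ] ℝ)
    {Ω : Set E} (hΩ : ∀ ω ∈ Ω, 0 < f ω) :
    {x | f x = 1} ∩ closure (coneHull Ω) =
      closure (convexHull ℝ ((fun ω => (f ω)⁻¹ • ω) '' Ω)) := by
  refine subset_antisymm ?_ (closure_minimal (convexHull_min ?_ ?_) ?_)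
  · rintro x ⟨hx : f x = 1, hx_cl⟩
    have := mem_closure_iff_nhdsWithin_neBot.mp hx_cl
    have hf : Filter.Tendsto f (nhdsWithin x (coneHull Ω)) (nhds 1) :=
      hx ▸ (f.continuous.tendsto x).mono_left nhdsWithin_le_nhds
    have hrescale :
        Filter.Tendsto (fun y => (f y)⁻¹ • y) (nhdsWithin x (coneHull Ω)) (nhds x) := by
      simpa using (hf.inv₀ one_ne_zero).smul (nhdsWithin_le_nhds (a := x) (s := coneHull Ω))
    refine mem_closure_of_tendsto hrescale ?_
    filter_upwards [hf.eventually (eventually_gt_nhds one_pos), self_mem_nhdsWithin] with y hfy hy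
    exact inv_smul_mem_convexHull_of_mem_coneHull (f : E →ₗ[ℝ] ℝ) hΩ hy hfy
  · rintro _ ⟨ω, hω, rfl⟩
    refine ⟨?_, subset_closure (smul_mem_coneHull (inv_nonneg.mpr (hΩ ω hω).le)
      (subset_coneHull hω))⟩
    show f ((f ω)⁻¹ • ω) = 1
    rw [map_smul, smul_eq_mul, inv_mul_cancel₀ (hΩ ω hω).ne']
  · exact (convex_hyperplane (f : E →ₗ[ℝ] ℝ).isLinear 1).inter convex_coneHull.closure
  · exact (isClosed_eq f.continuous continuous_const).inter isClosed_closure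

/-- Claim: for Ω with 0 ∉ Ω and h strictly positive on nonzero points of cl cone(Ω),
the slice {x : h·x = 1} ∩ cl cone(Ω) equals cl conv(Ω'), where Ω' normalizes Ω. -/
theorem slice_eq_closure_convexHull {m : ℕ} (Ω : Set (Fin m → ℝ))
    (h0 : (0 : Fin m → ℝ) ∉ Ω) (h : Fin m → ℝ)
    (hpos : ∀ ω ∈ closure (coneHull Ω), ω ≠ 0 → 0 < ∑ i, h i * ω i) :
    {x : Fin m → ℝ | ∑ i, h i * x i = 1} ∩ closure (coneHull Ω) =
      closure (convexHull ℝ ((fun ω => (∑ i, h i * ω i)⁻¹ • ω) '' Ω)) := by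
  let f : (Fin m → ℝ) →L[ℝ] ℝ :=
    LinearMap.toContinuousLinearMap (dotProductBilin ℝ ℝ h)
  have hf : ∀ x, f x = ∑ i, h i * x i := fun _ => rfl
  have hΩ : ∀ ω ∈ Ω, 0 < f ω := fun ω hω =>
    hpos ω (subset_closure (subset_coneHull hω)) (ne_of_mem_of_not_mem hω h0)
  simpa only [hf] using slice_closure_coneHull_eq_closure_convexHull f hΩ
end
end

section
/- For any covering polyhedron C ⊆ ℝ^n_+, the integer hull conv(C ∩ ℤ^n) is also a covering polyhedron: there exist m ∈ ℕ, a matrix M ∈ ℝ^{m×n} with nonnegative entries, and a vector d ∈ ℝ^m with nonnegative entries, such that conv(C ∩ ℤ^n) = {x ∈ ℝ^n_+ : Mx ≥ d}. -/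
/-!
Since `C` is an up-closed subset of `ℝⁿ₊`, its integer points form an up-closed subset of `ℕⁿ`; by
Dickson's lemma this has finitely many minimal elements `V`, and every integer point of `C` lies
above one of them. Rounding
one coordinate at a time shows that `conv (C ∩ ℤⁿ)` is stable under adding `ℝⁿ₊`, hence
`conv (C ∩ ℤⁿ) = conv V + ℝⁿ₊`. Finally `conv V + ℝⁿ₊` is the slice at height `1` of the cone
generated by the points `(1, v)` and `(0, eⱼ)`. By Fourier–Motzkin elimination this cone is cut
out by finitely many homogeneous inequalities, and their coefficients on the `eⱼ` are nonnegative
because the `(0, eⱼ)` lie in the cone.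
-/

noncomputable section

/-- A covering polyhedron: {x ∈ ℝⁿ₊ : Mx ≥ d} with M, d having nonnegative entries. -/
def IsCoveringPolyhedron {n : ℕ} (C : Set (Fin n → ℝ)) : Prop :=
  ∃ (m : ℕ) (M : Fin m → Fin n → ℝ) (d : Fin m → ℝ),
    (∀ i j, 0 ≤ M i j) ∧ (∀ i, 0 ≤ d i) ∧
    C = {x | (∀ j, 0 ≤ x j) ∧ ∀ i, d i ≤ ∑ j, M i j * x j}

/-- The integer points of ℝⁿ. -/
def intPoints {n : ℕ} : Set (Fin n → ℝ) := {x | ∀ i, ∃ z : ℤ, x i = (z : ℝ)}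

open Finset Matrix
open scoped Pointwise

universe u

section HCone

variable {𝕜 : Type*} [Field 𝕜] [LinearOrder 𝕜] [IsStrictOrderedRing 𝕜] {ι : Type u} [Fintype ι]

def IsHCone (X : Set (ι → 𝕜)) : Prop :=
  ∃ (κ : Type u) (_ : Fintype κ) (A : κ → ι → 𝕜), X = {x | ∀ k, 0 ≤ A k ⬝ᵥ x}

theorem isHCone_zero : IsHCone ({0} : Set (ι → 𝕜)) := by
  classical
  refine ⟨ι ⊕ ι, inferInstance, Sum.elim (fun i => Pi.single i 1) (fun i => -Pi.single i 1), ?_⟩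
  ext x
  simp [le_antisymm_iff, Pi.le_def, and_comm]

/-- The scalar core of Fourier–Motzkin elimination, for `α k = A k ⬝ᵥ a` and `β k = A k ⬝ᵥ x`. -/
theorem exists_nonneg_mul_le_of_mul_le_mul {κ : Type*} [Fintype κ] (α β : κ → 𝕜)
    (hβ : ∀ k, 0 ≤ α k → 0 ≤ β k)
    (hαβ : ∀ k l, 0 < α k → α l < 0 → α l * β k ≤ α k * β l) :
    ∃ c, 0 ≤ c ∧ ∀ k, c * α k ≤ β k := by
  classical
  let L : Finset 𝕜 := insert 0 ((univ.filter (α · < 0)).image fun l => β l / α l)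
  have hL : L.Nonempty := insert_nonempty _ _
  refine ⟨L.max' hL, L.le_max' 0 (mem_insert_self _ _), fun k => ?_⟩
  rcases lt_trichotomy (α k) 0 with hk | hk | hk
  · have hmem : β k / α k ∈ L := mem_insert_of_mem (mem_image_of_mem _ (by simp [hk]))
    exact (div_le_iff_of_neg hk).1 (L.le_max' _ hmem)
  · simpa [hk] using hβ k hk.ge
  · rw [← le_div_iff₀ hk]
    refine L.max'_le hL _ fun y hy => ?_
    rcases mem_insert.1 hy with rfl | hy
    · exact div_nonneg (hβ k hk.le) hk.le
    · obtain ⟨l, hl, rfl⟩ := mem_image.1 hy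
      have hl : α l < 0 := (mem_filter.1 hl).2
      rw [div_le_iff_of_neg hl, div_mul_eq_mul_div, div_le_iff₀ hk]
      linarith [hαβ k l hk hl]

theorem IsHCone.add_ray {X : Set (ι → 𝕜)} (hX : IsHCone X) (a : ι → 𝕜) :
    IsHCone {x | ∃ c : 𝕜, 0 ≤ c ∧ x - c • a ∈ X} := by
  classical
  obtain ⟨κ, _, A, rfl⟩ := hX
  let α k := A k ⬝ᵥ a
  refine ⟨{k // 0 ≤ α k} ⊕ {p : κ × κ // 0 < α p.1 ∧ α p.2 < 0}, inferInstance,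
    Sum.elim (fun k => A k) (fun p => α p.1.1 • A p.1.2 - α p.1.2 • A p.1.1), ?_⟩
  ext x
  simp only [Set.mem_ofPred_eq, dotProduct_sub, dotProduct_smul, sub_dotProduct, smul_dotProduct,
    smul_eq_mul, Sum.forall, Sum.elim_inl, Sum.elim_inr, Subtype.forall, Prod.forall, sub_nonneg]
  constructor
  · rintro ⟨c, hc, h⟩
    refine ⟨fun k hk => ?_, fun k l hkl => ?_⟩
    · nlinarith [h k]
    · nlinarith [h k, h l, hkl.1, hkl.2]
  · rintro ⟨h0, h1⟩
    exact exists_nonneg_mul_le_of_mul_le_mul _ _ h0 fun k l hk hl => h1 k l ⟨hk, hl⟩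

theorem isHCone_nonnegCombinations {κ : Type*} (g : κ → ι → 𝕜) (s : Finset κ) :
    IsHCone {x | ∃ t : κ → 𝕜, (∀ k ∈ s, 0 ≤ t k) ∧ ∑ k ∈ s, t k • g k = x} := by
  classical
  induction s using Finset.induction_on with
  | empty =>
    convert (isHCone_zero : IsHCone ({0} : Set (ι → 𝕜))) using 1
    ext x
    simp [eq_comm]
  | insert a s ha ih =>
    convert ih.add_ray (g a) using 1
    ext x
    simp only [Set.mem_ofPred_eq, forall_mem_insert, sum_insert ha]
    constructor
    · rintro ⟨t, ⟨hta, ht⟩, rfl⟩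
      exact ⟨t a, hta, t, ht, by abel⟩
    · rintro ⟨c, hc, t, ht, hx⟩
      have hupd : ∀ k ∈ s, Function.update t a c k = t k := fun k hk =>
        Function.update_of_ne (ne_of_mem_of_not_mem hk ha) _ _
      refine ⟨Function.update t a c,
        ⟨by simpa using hc, fun k hk => (hupd k hk).symm ▸ ht k hk⟩, ?_⟩
      rw [Function.update_self, sum_congr rfl fun k hk => by rw [hupd k hk], hx]
      abel

end HCone

section Homogenization

variable {R : Type*} [Semiring R] {n : ℕ}

theorem sum_smul_vecCons {κ : Type*} (s : Finset κ) (t c : κ → R) (x : κ → Fin n → R) :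
    ∑ k ∈ s, t k • vecCons (c k) (x k) = vecCons (∑ k ∈ s, t k * c k) (∑ k ∈ s, t k • x k) := by
  classical
  induction s using Finset.induction_on with
  | empty => simp
  | insert a s ha ih =>
    rw [sum_insert ha, sum_insert ha, sum_insert ha, ih, smul_cons, cons_add_cons, smul_eq_mul]

def homogenizedGenerators : (Fin n → R) ⊕ Fin n → Fin (n + 1) → R :=
  Sum.elim (vecCons 1) fun j => vecCons 0 (Pi.single j 1)

theorem sum_smul_homogenizedGenerators (V : Finset (Fin n → R)) (t : (Fin n → R) ⊕ Fin n → R) :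
    ∑ k ∈ V.disjSum univ, t k • homogenizedGenerators k =
      vecCons (∑ v ∈ V, t (.inl v)) ((∑ v ∈ V, t (.inl v) • v) + fun j => t (.inr j)) := by
  classical
  simp only [sum_disjSum, homogenizedGenerators, Sum.elim_inl, Sum.elim_inr, sum_smul_vecCons,
    mul_one, mul_zero, sum_const_zero, cons_add_cons, add_zero, ← Pi.single_smul, smul_eq_mul]
  simp [univ_sum_single]

theorem mem_convexHull_add_Ici_iff {𝕜 : Type*} [Field 𝕜] [LinearOrder 𝕜] [IsStrictOrderedRing 𝕜]
    {V : Finset (Fin n → 𝕜)} {x : Fin n → 𝕜} :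
    x ∈ convexHull 𝕜 (V : Set (Fin n → 𝕜)) + Set.Ici 0 ↔
      ∃ t : (Fin n → 𝕜) ⊕ Fin n → 𝕜, (∀ k ∈ V.disjSum univ, 0 ≤ t k) ∧
        ∑ k ∈ V.disjSum univ, t k • homogenizedGenerators k = vecCons 1 x := by
  simp only [sum_smul_homogenizedGenerators, vecCons_inj, Set.mem_add, mem_convexHull',
    Set.mem_Ici, Sum.forall, inl_mem_disjSum, inr_mem_disjSum, mem_univ, forall_const]
  constructor
  · rintro ⟨_, ⟨w, hw0, hw1, rfl⟩, r, hr, rfl⟩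
    exact ⟨Sum.elim w r, ⟨fun v hv => by simpa using hw0 v hv, hr⟩, hw1, rfl⟩
  · rintro ⟨t, ⟨ht, hr⟩, h1, rfl⟩
    exact ⟨_, ⟨_, fun v hv => ht v hv, h1, rfl⟩, _, hr, rfl⟩

end Homogenization

theorem IsCoveringPolyhedron.of_fintype {n : ℕ} {C : Set (Fin n → ℝ)} {κ : Type*} [Fintype κ]
    (M : κ → Fin n → ℝ) (d : κ → ℝ) (hM : ∀ k j, 0 ≤ M k j) (hd : ∀ k, 0 ≤ d k)
    (hC : C = {x | 0 ≤ x ∧ ∀ k, d k ≤ M k ⬝ᵥ x}) : IsCoveringPolyhedron C := by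
  let e := Fintype.equivFin κ
  refine ⟨Fintype.card κ, M ∘ e.symm, d ∘ e.symm, fun i j => hM _ j, fun i => hd _, ?_⟩
  rw [hC]
  ext x
  simp only [Set.mem_ofPred_eq, Pi.le_def, Pi.zero_apply, Function.comp_apply, dotProduct]
  exact and_congr_right fun _ => e.forall_congr_left

theorem IsCoveringPolyhedron.subset_Ici {n : ℕ} {C : Set (Fin n → ℝ)}
    (hC : IsCoveringPolyhedron C) : C ⊆ Set.Ici 0 := by
  obtain ⟨m, M, d, -, -, rfl⟩ := hC
  exact fun x hx => hx.1

theorem IsCoveringPolyhedron.isUpperSet {n : ℕ} {C : Set (Fin n → ℝ)}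
    (hC : IsCoveringPolyhedron C) : IsUpperSet C := by
  obtain ⟨m, M, d, hM, -, rfl⟩ := hC
  exact fun x y hxy hx => ⟨fun j => (hx.1 j).trans (hxy j), fun i => (hx.2 i).trans
    (sum_le_sum fun j _ => mul_le_mul_of_nonneg_left (hxy j) (hM i j))⟩

theorem isCoveringPolyhedron_convexHull_add_Ici {n : ℕ} (V : Finset (Fin n → ℝ))
    (hV : ∀ v ∈ V, 0 ≤ v) :
    IsCoveringPolyhedron (convexHull ℝ (V : Set (Fin n → ℝ)) + Set.Ici 0) := by
  obtain ⟨κ, _, A, hA⟩ := isHCone_nonnegCombinations homogenizedGenerators (V.disjSum univ)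
  have hmem : ∀ x, x ∈ convexHull ℝ (V : Set (Fin n → ℝ)) + Set.Ici 0 ↔
      ∀ k, 0 ≤ A k ⬝ᵥ vecCons 1 x := fun x =>
    mem_convexHull_add_Ici_iff.trans (Set.ext_iff.1 hA _)
  have hA_tail : ∀ k j, 0 ≤ vecTail (A k) j := fun k j => by
    classical
    have hgen := (Set.ext_iff.1 hA (homogenizedGenerators (.inr j))).1
      ⟨Pi.single (.inr j) 1, fun i _ => (Pi.single_nonneg (α := fun _ => ℝ)).2 zero_le_one i,
        by simp [Pi.single_apply, ite_smul]⟩ k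
    simpa [homogenizedGenerators, dotProduct_cons] using hgen
  have hnonneg : ∀ x ∈ convexHull ℝ (V : Set (Fin n → ℝ)) + Set.Ici 0, 0 ≤ x := by
    rintro _ ⟨a, ha, r, hr, rfl⟩
    exact add_nonneg (convexHull_min hV (convex_Ici 0) ha) hr
  refine .of_fintype (fun k => vecTail (A k)) (fun k => max (-A k 0) 0) hA_tail
    (fun k => le_max_right _ _) ?_
  ext x
  have hcons : ∀ k, A k ⬝ᵥ vecCons 1 x = A k 0 + vecTail (A k) ⬝ᵥ x := by
    simp [dotProduct_cons, vecHead]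
  rw [hmem]
  constructor
  · intro h
    have hx : 0 ≤ x := hnonneg x ((hmem x).2 h)
    exact ⟨hx, fun k => max_le (by linarith [h k, hcons k])
      (dotProduct_nonneg_of_nonneg (hA_tail k) hx)⟩
  · rintro ⟨hx, h⟩ k
    linarith [hcons k, h k, le_max_left (-A k 0) 0]

theorem isPWO_Ici_inter_intPoints (n : ℕ) : (Set.Ici 0 ∩ intPoints : Set (Fin n → ℝ)).IsPWO := by
  refine ((Set.univ : Set (Fin n → ℕ)).isPWO_of_wellQuasiOrderedLE.image_of_monotone
    (f := fun y j => (y j : ℝ)) fun a b h j => Nat.cast_le.2 (h j)).mono ?_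
  rintro x ⟨hx0, hxZ⟩
  choose z hz using hxZ
  refine ⟨fun j => (z j).toNat, trivial, funext fun j => ?_⟩
  have hzj : 0 ≤ z j := Int.cast_nonneg_iff.1 (hz j ▸ hx0 j)
  show ((z j).toNat : ℝ) = x j
  rw [hz j, ← Int.cast_natCast, Int.toNat_of_nonneg hzj]

theorem add_mem_intPoints {n : ℕ} {x y : Fin n → ℝ} (hx : x ∈ intPoints) (hy : y ∈ intPoints) :
    x + y ∈ intPoints := fun i => by
  obtain ⟨a, ha⟩ := hx i
  obtain ⟨b, hb⟩ := hy i
  exact ⟨a + b, by simp [ha, hb]⟩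

theorem single_mem_intPoints {n : ℕ} (j : Fin n) (k : ℤ) : Pi.single j (k : ℝ) ∈ intPoints :=
  fun i => by
    rcases eq_or_ne i j with rfl | hij
    · exact ⟨k, by simp⟩
    · exact ⟨0, by simp [hij]⟩

theorem add_single_mem_convexHull_inter_intPoints {n : ℕ} {C : Set (Fin n → ℝ)}
    (hC : IsUpperSet C) {x : Fin n → ℝ} (hx : x ∈ convexHull ℝ (C ∩ intPoints)) (j : Fin n)
    {c : ℝ} (hc : 0 ≤ c) : x + Pi.single j c ∈ convexHull ℝ (C ∩ intPoints) := by
  refine convexHull_min (fun s hs => ?_) ((convex_convexHull ℝ _).translate_preimage_left _) hx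
  have hstep : ∀ k : ℤ, 0 ≤ k → s + Pi.single j (k : ℝ) ∈ C ∩ intPoints := fun k hk =>
    ⟨hC (le_add_of_nonneg_right (Pi.single_nonneg.2 (Int.cast_nonneg_iff.2 hk))) hs.1,
      add_mem_intPoints hs.2 (single_mem_intPoints j k)⟩
  have hsplit : s + Pi.single j c = (s + Pi.single j (⌊c⌋ : ℝ)) + Int.fract c •
      ((s + Pi.single j ((⌊c⌋ + 1 : ℤ) : ℝ)) - (s + Pi.single j (⌊c⌋ : ℝ))) := by
    rw [add_sub_add_left_eq_sub, ← Pi.single_sub, ← Pi.single_smul, add_assoc, ← Pi.single_add]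
    push_cast
    rw [add_sub_cancel_left, smul_eq_mul, mul_one, Int.floor_add_fract]
  rw [Set.mem_preimage, hsplit]
  have hfloor : 0 ≤ ⌊c⌋ := Int.floor_nonneg.2 hc
  exact (convex_convexHull ℝ _).add_smul_sub_mem (subset_convexHull ℝ _ (hstep _ hfloor))
    (subset_convexHull ℝ _ (hstep _ (by omega))) ⟨Int.fract_nonneg c, (Int.fract_lt_one c).le⟩

theorem add_mem_convexHull_inter_intPoints {n : ℕ} {C : Set (Fin n → ℝ)} (hC : IsUpperSet C)
    {x r : Fin n → ℝ} (hx : x ∈ convexHull ℝ (C ∩ intPoints)) (hr : 0 ≤ r) :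
    x + r ∈ convexHull ℝ (C ∩ intPoints) := by
  rw [← univ_sum_single r]
  refine sum_induction _ (fun v => ∀ x ∈ convexHull ℝ (C ∩ intPoints),
    x + v ∈ convexHull ℝ (C ∩ intPoints)) (fun a b ha hb y hy => ?_) (by simp)
    (fun j _ y hy => add_single_mem_convexHull_inter_intPoints hC hy j (hr j)) x hx
  rw [← add_assoc]
  exact hb _ (ha y hy)

theorem convexHull_inter_intPoints_eq {n : ℕ} {C : Set (Fin n → ℝ)} (hC : IsUpperSet C)
    (hS : (C ∩ intPoints).IsPWO) :
    convexHull ℝ (C ∩ intPoints) =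
      convexHull ℝ {x | Minimal (· ∈ C ∩ intPoints) x} + Set.Ici 0 := by
  refine (convexHull_min (fun a ha => ?_) ((convex_convexHull ℝ _).add (convex_Ici 0))).antisymm ?_
  · obtain ⟨b, hba, hb⟩ := hS.exists_le_minimal ha
    exact ⟨b, subset_convexHull ℝ _ hb, a - b, sub_nonneg.2 hba, add_sub_cancel b a⟩
  · rintro _ ⟨x, hx, r, hr, rfl⟩
    exact add_mem_convexHull_inter_intPoints hC (convexHull_mono (fun y hy => hy.prop) hx) hr

/-- Proposition: the integer hull of a covering polyhedron is a covering polyhedron. -/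
theorem integer_hull_covering {n : ℕ} (C : Set (Fin n → ℝ))
    (hC : IsCoveringPolyhedron C) :
    IsCoveringPolyhedron (convexHull ℝ (C ∩ intPoints)) := by
  have hS : (C ∩ intPoints).IsPWO :=
    (isPWO_Ici_inter_intPoints n).mono (Set.inter_subset_inter_left _ hC.subset_Ici)
  have hV : {x | Minimal (· ∈ C ∩ intPoints) x}.Finite :=
    (setOfPred_minimal_antichain _).finite_of_partiallyWellOrderedOn (hS.mono fun x hx => hx.prop)
  rw [convexHull_inter_intPoints_eq hC.isUpperSet hS, ← hV.coe_toFinset]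
  exact isCoveringPolyhedron_convexHull_add_Ici _ fun v hv =>
    hC.subset_Ici (hV.mem_toFinset.1 hv).prop.1
end
end

section
/- Let C ⊆ ℝ^n_+ be a covering polyhedron and let C_I := C ∩ ℤ^n. Then there exists a finite subset C_I' ⊆ C_I such that conv(C_I') + ℝ^n_+ = conv(C_I). -/
open Pointwise

noncomputable section

/-- Dickson's lemma, in the form of a finite dominating subset. -/
lemma exists_finite_dominating {n : ℕ} (S : Set (Fin n → ℕ)) :
    ∃ F : Finset (Fin n → ℕ), ↑F ⊆ S ∧ ∀ x ∈ S, ∃ f ∈ F, f ≤ x := by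
  haveI : ∀ i : Fin n, IsWellOrder ℕ (· < ·) := fun _ => inferInstance
  have hpwo : S.IsPWO := Set.isPWO_of_wellQuasiOrderedLE S
  set T : Set (Fin n → ℕ) := {m | m ∈ S ∧ ∀ y ∈ S, y ≤ m → y = m} with hT
  have hTsub : T ⊆ S := fun t ht => ht.1
  have hTanti : IsAntichain (· ≤ ·) T := by
    intro a ha b hb hab h
    exact hab (hb.2 a ha.1 h)
  have hTfin : T.Finite :=
    hTanti.finite_of_partiallyWellOrderedOn (hpwo.mono hTsub)
  refine ⟨hTfin.toFinset, by simpa using hTsub, ?_⟩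
  intro x hx
  set S' : Set (Fin n → ℕ) := {y | y ∈ S ∧ y ≤ x} with hS'
  have h' : S'.IsWF := (hpwo.mono fun y hy => hy.1).isWF
  have hne : S'.Nonempty := ⟨x, hx, le_refl x⟩
  have hm : h'.min hne ∈ S' := h'.min_mem hne
  have hminT : h'.min hne ∈ T := by
    refine ⟨hm.1, fun y hy hyx => ?_⟩
    by_contra hne'
    exact h'.not_lt_min hne ⟨hy, hyx.trans hm.2⟩ (lt_of_le_of_ne hyx hne')
  exact ⟨h'.min hne, hTfin.mem_toFinset.2 hminT, hm.2⟩

/-- For a covering polyhedron C with integer points C_I, there is a finite subset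
C_I' ⊆ C_I with conv(C_I') + ℝⁿ₊ = conv(C_I). -/
theorem exists_finite_generating_subset {n : ℕ} (C : Set (Fin n → ℝ))
    (hC : IsCoveringPolyhedron C) :
    ∃ F : Finset (Fin n → ℝ), (F : Set (Fin n → ℝ)) ⊆ C ∩ intPoints ∧
      convexHull ℝ (F : Set (Fin n → ℝ)) + {y : Fin n → ℝ | ∀ i, 0 ≤ y i} =
        convexHull ℝ (C ∩ intPoints) := by
  classical
  obtain ⟨m, M, d, hM, hd, hCeq⟩ := hC
  set P : Set (Fin n → ℝ) := {y : Fin n → ℝ | ∀ i, 0 ≤ y i} with hP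
  -- C is upward closed
  have hup : ∀ x ∈ C, ∀ y : Fin n → ℝ, (∀ i, x i ≤ y i) → y ∈ C := by
    intro x hx y hxy
    rw [hCeq] at hx ⊢
    refine ⟨fun j => (hx.1 j).trans (hxy j), fun i => (hx.2 i).trans ?_⟩
    exact Finset.sum_le_sum fun j _ => mul_le_mul_of_nonneg_left (hxy j) (hM i j)
  -- the embedding of ℕⁿ into ℝⁿ
  set e : (Fin n → ℕ) → (Fin n → ℝ) := fun a i => (a i : ℝ) with he
  set S : Set (Fin n → ℕ) := {a | e a ∈ C ∩ intPoints} with hS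
  obtain ⟨F₀, hF₀S, hF₀dom⟩ := exists_finite_dominating S
  refine ⟨F₀.image e, ?_, ?_⟩
  · intro x hx
    simp only [Finset.coe_image, Set.mem_image, Finset.mem_coe] at hx
    obtain ⟨a, ha, rfl⟩ := hx
    exact hF₀S ha
  -- key 2 : F + P ⊆ conv (C ∩ intPoints)
  have key2 : (↑(F₀.image e) : Set (Fin n → ℝ)) + P ⊆ convexHull ℝ (C ∩ intPoints) := by
    rintro p hp
    rw [Set.mem_add] at hp
    obtain ⟨f, hf, y, hy, rfl⟩ := hp
    simp only [Finset.coe_image, Set.mem_image, Finset.mem_coe] at hf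
    obtain ⟨a, ha, rfl⟩ := hf
    have haC : e a ∈ C := (hF₀S ha).1
    -- box corners
    set lo : Fin n → ℝ := fun i => e a i + (⌊y i⌋ : ℝ) with hlo
    set hi : Fin n → ℝ := fun i => e a i + (⌈y i⌉ : ℝ) with hhi
    have hcorners : Set.pi Set.univ (fun i => ({lo i, hi i} : Set ℝ)) ⊆ C ∩ intPoints := by
      intro c hc
      have hge : ∀ i, e a i ≤ c i := by
        intro i
        rcases hc i (Set.mem_univ i) with h | h <;> rw [h]
        · have h0 : (0:ℤ) ≤ ⌊y i⌋ := Int.floor_nonneg.2 (hy i)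
          have h0' : (0:ℝ) ≤ (⌊y i⌋ : ℝ) := by exact_mod_cast h0
          simp only [hlo]; linarith
        · have h0 : (0:ℤ) ≤ ⌈y i⌉ := Int.ceil_nonneg (hy i)
          have h0' : (0:ℝ) ≤ (⌈y i⌉ : ℝ) := by exact_mod_cast h0
          simp only [hhi]; linarith
      refine ⟨hup _ haC _ hge, ?_⟩
      intro i
      rcases hc i (Set.mem_univ i) with h | h <;> rw [h]
      · exact ⟨(a i : ℤ) + ⌊y i⌋, by simp [hlo, he]⟩
      · exact ⟨(a i : ℤ) + ⌈y i⌉, by simp [hhi, he]⟩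
    have hmem : e a + y ∈ convexHull ℝ (Set.pi Set.univ (fun i => ({lo i, hi i} : Set ℝ))) := by
      apply mem_convexHull_pi
      intro i _
      rw [convexHull_pair, segment_eq_Icc]
      · constructor
        · simpa [hlo] using Int.floor_le (y i)
        · simpa [hhi] using Int.le_ceil (y i)
      · have : (⌊y i⌋ : ℝ) ≤ (⌈y i⌉ : ℝ) := (Int.floor_le (y i)).trans (Int.le_ceil (y i))
        simpa [hlo, hhi] using this
    exact convexHull_mono hcorners hmem
  -- key 1 : C ∩ intPoints ⊆ F + P
  have key1 : C ∩ intPoints ⊆ (↑(F₀.image e) : Set (Fin n → ℝ)) + P := by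
    rintro x ⟨hxC, hxI⟩
    have hx0 : ∀ i, 0 ≤ x i := by rw [hCeq] at hxC; exact hxC.1
    choose z hz using hxI
    set a : Fin n → ℕ := fun i => (z i).toNat with ha
    have hea : e a = x := by
      funext i
      have hz0 : (0:ℤ) ≤ z i := by
        have := hx0 i; rw [hz i] at this; exact_mod_cast this
      show ((((z i).toNat : ℕ)) : ℝ) = x i
      rw [hz i]
      exact_mod_cast Int.toNat_of_nonneg hz0
    have haS : a ∈ S := by rw [hS, Set.mem_setOf_eq, hea]; exact ⟨hxC, fun i => ⟨z i, hz i⟩⟩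
    obtain ⟨f, hfF, hfa⟩ := hF₀dom a haS
    rw [Set.mem_add]
    refine ⟨e f, ?_, x - e f, ?_, by abel⟩
    · simp only [Finset.coe_image, Set.mem_image, Finset.mem_coe]
      exact ⟨f, hfF, rfl⟩
    · intro i
      have : (f i : ℝ) ≤ (a i : ℝ) := by exact_mod_cast hfa i
      have hax : (a i : ℝ) = x i := congrFun hea i
      simp only [Pi.sub_apply, he]
      linarith
  -- convexity of P
  have hPconv : Convex ℝ P := by
    intro x hx y hy s t hs ht hst i
    simpa using add_nonneg (mul_nonneg hs (hx i)) (mul_nonneg ht (hy i))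
  have hPhull : convexHull ℝ P = P := hPconv.convexHull_eq
  have hsum : convexHull ℝ (↑(F₀.image e) : Set (Fin n → ℝ)) + P =
      convexHull ℝ ((↑(F₀.image e) : Set (Fin n → ℝ)) + P) := by
    rw [convexHull_add, hPhull]
  apply Set.Subset.antisymm
  · rw [hsum]
    exact convexHull_min key2 (convex_convexHull ℝ _)
  · rw [hsum]
    exact convexHull_mono key1
end
end

section
/- Let Q ⊆ ℝ^n_+ be a covering set, let k be a positive integer, let t < n be a positive integer, and set Q' := proj_{[t]} Q. Then for every C' ∈ 𝓒(Q') there exists C ∈ 𝓒(Q) such that proj_{[t]} conv(C ∩ ℤ^n) = conv(C' ∩ ℤ^t). -/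
/-!
Extend each defining functional `f` of `C'` by zero to a functional `f̂` on `ℝⁿ`. Since
`f̂ · x = f · proj x`, the functional `f̂` is bounded on `Q` with the same supremum as `f` on
`proj Q`, so the `f̂` define some `C ∈ 𝓒(Q)`. Projection maps `C ∩ ℤⁿ` onto `C' ∩ ℤᵗ`
(the zero extension of a point of `C' ∩ ℤᵗ` lies in `C ∩ ℤⁿ`), and a linear map commutes with
taking convex hulls.
-/

noncomputable section

/-- A covering set: {x ∈ ℝⁿ₊ : Mᵢ·x ≥ dᵢ ∀ i ∈ I} with nonnegative data and an
arbitrary (possibly infinite) index set I. -/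
def IsCoveringSet {n : ℕ} (Q : Set (Fin n → ℝ)) : Prop :=
  ∃ (ι : Type) (M : ι → Fin n → ℝ) (d : ι → ℝ),
    (∀ i j, 0 ≤ M i j) ∧ (∀ i, 0 ≤ d i) ∧
    Q = {x | (∀ j, 0 ≤ x j) ∧ ∀ i, d i ≤ ∑ j, M i j * x j}

/-- Λ(S): the linear functionals bounded above on S. -/
def Lambda {n : ℕ} (S : Set (Fin n → ℝ)) : Set (Fin n → ℝ) :=
  {f | BddAbove ((fun x => ∑ i, f i * x i) '' S)}

/-- 𝓒(Q): the polyhedra cut out in ℝⁿ₊ by k valid inequalities of Q. -/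
def aggC {n : ℕ} (k : ℕ) (Q : Set (Fin n → ℝ)) : Set (Set (Fin n → ℝ)) :=
  {C | ∃ f : Fin k → (Fin n → ℝ), (∀ j, f j ∈ Lambda Q) ∧
    C = {x | (∀ i, 0 ≤ x i) ∧
      ∀ j, ∑ i, f j i * x i ≤ sSup ((fun s => ∑ i, f j i * s i) '' Q)}}

/-- The k-aggregation closure 𝓐ₖ(Q) = ⋂_{C ∈ 𝓒(Q)} conv(C ∩ ℤⁿ). -/
def aggClosure {n : ℕ} (k : ℕ) (Q : Set (Fin n → ℝ)) : Set (Fin n → ℝ) :=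
  ⋂ C ∈ aggC k Q, convexHull ℝ (C ∩ intPoints)

/-- Orthogonal projection onto the first t coordinates. -/
def projT {n t : ℕ} (ht : t ≤ n) (S : Set (Fin n → ℝ)) : Set (Fin t → ℝ) :=
  (fun x : Fin n → ℝ => fun i : Fin t => x (Fin.castLE ht i)) '' S

open Function

lemma Fintype.sum_extend_zero_mul {ι κ : Type*} [Fintype ι] [Fintype κ] {e : ι → κ}
    (he : Injective e) (f : ι → ℝ) (x : κ → ℝ) :
    ∑ j, extend e f 0 j * x j = ∑ i, f i * x (e i) :=
  (Fintype.sum_of_injective e he _ _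
    (fun j hj => by rw [extend_apply' _ _ _ hj, Pi.zero_apply, zero_mul])
    (fun i => by rw [he.extend_apply])).symm

lemma extend_zero_apply_of_forall {ι κ : Type*} {e : ι → κ} (he : Injective e) {p : ℝ → Prop}
    (h0 : p 0) {y : ι → ℝ} (hy : ∀ i, p (y i)) (j : κ) : p (extend e y 0 j) := by
  by_cases hj : ∃ i, e i = j
  · obtain ⟨i, rfl⟩ := hj
    rw [he.extend_apply]
    exact hy i
  · rwa [extend_apply' _ _ _ hj]

def aggPolyhedron {n k : ℕ} (Q : Set (Fin n → ℝ)) (f : Fin k → Fin n → ℝ) : Set (Fin n → ℝ) :=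
  {x | (∀ i, 0 ≤ x i) ∧ ∀ j, ∑ i, f j i * x i ≤ sSup ((fun s => ∑ i, f j i * s i) '' Q)}

lemma mem_aggC_iff {n k : ℕ} {Q C : Set (Fin n → ℝ)} :
    C ∈ aggC k Q ↔ ∃ f : Fin k → Fin n → ℝ, (∀ j, f j ∈ Lambda Q) ∧ C = aggPolyhedron Q f :=
  Iff.rfl

lemma projT_eq_image_funLeft {n t : ℕ} (h : t ≤ n) (S : Set (Fin n → ℝ)) :
    projT h S = LinearMap.funLeft ℝ ℝ (Fin.castLE h) '' S :=
  rfl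

section ExtendByZero

variable {t n : ℕ} {e : Fin t → Fin n}

lemma image_sum_extend_zero_mul (he : Injective e) (f : Fin t → ℝ) (Q : Set (Fin n → ℝ)) :
    (fun s => ∑ i, extend e f 0 i * s i) '' Q
      = (fun y => ∑ i, f i * y i) '' (LinearMap.funLeft ℝ ℝ e '' Q) := by
  rw [Set.image_image]
  exact Set.image_congr fun x _ => Fintype.sum_extend_zero_mul he f x

lemma extend_zero_mem_Lambda_iff (he : Injective e) (f : Fin t → ℝ) (Q : Set (Fin n → ℝ)) :
    extend e f 0 ∈ Lambda Q ↔ f ∈ Lambda (LinearMap.funLeft ℝ ℝ e '' Q) := by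
  simp only [Lambda, Set.mem_ofPred_eq, image_sum_extend_zero_mul he]

lemma funLeft_mem_aggPolyhedron {k : ℕ} (he : Injective e) {Q : Set (Fin n → ℝ)}
    {f : Fin k → Fin t → ℝ} {x : Fin n → ℝ} (hx : x ∈ aggPolyhedron Q fun j => extend e (f j) 0) :
    LinearMap.funLeft ℝ ℝ e x ∈ aggPolyhedron (LinearMap.funLeft ℝ ℝ e '' Q) f := by
  refine ⟨fun i => hx.1 (e i), fun j => ?_⟩
  have := hx.2 j
  rwa [image_sum_extend_zero_mul he, Fintype.sum_extend_zero_mul he] at this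

lemma extend_zero_mem_aggPolyhedron {k : ℕ} (he : Injective e) {Q : Set (Fin n → ℝ)}
    {f : Fin k → Fin t → ℝ} {y : Fin t → ℝ}
    (hy : y ∈ aggPolyhedron (LinearMap.funLeft ℝ ℝ e '' Q) f) :
    extend e y 0 ∈ aggPolyhedron Q fun j => extend e (f j) 0 := by
  refine ⟨extend_zero_apply_of_forall he le_rfl hy.1, fun j => ?_⟩
  rw [image_sum_extend_zero_mul he, Fintype.sum_extend_zero_mul he]
  simpa only [he.extend_apply] using hy.2 j

lemma funLeft_mem_intPoints {x : Fin n → ℝ} (hx : x ∈ intPoints) :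
    LinearMap.funLeft ℝ ℝ e x ∈ intPoints :=
  fun i => hx (e i)

lemma extend_zero_mem_intPoints (he : Injective e) {y : Fin t → ℝ} (hy : y ∈ intPoints) :
    extend e y 0 ∈ intPoints :=
  extend_zero_apply_of_forall (p := fun r => ∃ z : ℤ, r = z) he ⟨0, Int.cast_zero.symm⟩ hy

lemma funLeft_extend_zero (he : Injective e) (y : Fin t → ℝ) :
    LinearMap.funLeft ℝ ℝ e (extend e y 0) = y :=
  funext fun i => he.extend_apply y 0 i

lemma image_funLeft_aggPolyhedron_extend_zero_inter_intPoints {k : ℕ} (he : Injective e)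
    (Q : Set (Fin n → ℝ)) (f : Fin k → Fin t → ℝ) :
    LinearMap.funLeft ℝ ℝ e '' (aggPolyhedron Q (fun j => extend e (f j) 0) ∩ intPoints)
      = aggPolyhedron (LinearMap.funLeft ℝ ℝ e '' Q) f ∩ intPoints := by
  ext y
  constructor
  · rintro ⟨x, ⟨hxC, hxZ⟩, rfl⟩
    exact ⟨funLeft_mem_aggPolyhedron he hxC, funLeft_mem_intPoints hxZ⟩
  · rintro ⟨hyC, hyZ⟩
    exact ⟨extend e y 0, ⟨extend_zero_mem_aggPolyhedron he hyC, extend_zero_mem_intPoints he hyZ⟩,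
      funLeft_extend_zero he y⟩

end ExtendByZero

theorem proj_integer_hull_of_aggC_general {n t k : ℕ} (htn : t < n)
    (Q : Set (Fin n → ℝ))
    (C' : Set (Fin t → ℝ)) (hC' : C' ∈ aggC k (projT htn.le Q)) :
    ∃ C ∈ aggC k Q,
      projT htn.le (convexHull ℝ (C ∩ intPoints)) = convexHull ℝ (C' ∩ intPoints) := by
  have he := Fin.castLE_injective htn.le
  obtain ⟨f, hfΛ, rfl⟩ := hC'
  refine ⟨aggPolyhedron Q fun j => extend (Fin.castLE htn.le) (f j) 0,
    mem_aggC_iff.2 ⟨_, fun j => (extend_zero_mem_Lambda_iff he _ Q).2 (hfΛ j), rfl⟩, ?_⟩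
  rw [projT_eq_image_funLeft, LinearMap.image_convexHull,
    image_funLeft_aggPolyhedron_extend_zero_inter_intPoints he]
  rfl

/-- Lemma: for every C' ∈ 𝓒(proj Q) there exists C ∈ 𝓒(Q) whose integer hull projects
onto the integer hull of C'. -/
theorem proj_integer_hull_of_aggC {n t k : ℕ} (hk : 0 < k) (ht : 0 < t) (htn : t < n)
    (Q : Set (Fin n → ℝ)) (hQ : IsCoveringSet Q)
    (C' : Set (Fin t → ℝ)) (hC' : C' ∈ aggC k (projT htn.le Q)) :
    ∃ C ∈ aggC k Q,
      projT htn.le (convexHull ℝ (C ∩ intPoints)) = convexHull ℝ (C' ∩ intPoints) :=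
  proj_integer_hull_of_aggC_general htn Q C' hC'
end
end

section
/- Let C ⊆ ℝ^n_+ be a covering polyhedron and let t < n be a positive integer. Then proj_{[t]}(C ∩ ℤ^n) = (proj_{[t]} C) ∩ ℤ^t, i.e., the projection onto the first t coordinates of the integer points of C equals the set of integer points of the projection of C. -/
noncomputable section

/-- For a covering polyhedron C, the projection of its integer points equals
the integer points of its projection. -/
theorem proj_intPoints_eq {n t : ℕ} (ht : 0 < t) (htn : t < n)
    (C : Set (Fin n → ℝ)) (hC : IsCoveringPolyhedron C) :
    projT htn.le (C ∩ intPoints) = (projT htn.le C) ∩ intPoints := by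
  obtain ⟨m, M, d, hM, hd, hCeq⟩ := hC
  apply Set.Subset.antisymm
  · rintro y ⟨x, ⟨hxC, hxInt⟩, rfl⟩
    refine ⟨⟨x, hxC, rfl⟩, fun i => hxInt _⟩
  · rintro y ⟨⟨x, hxC, rfl⟩, hyInt⟩
    -- round up tail coordinates
    set x' : Fin n → ℝ := fun j => if (j : ℕ) < t then x j else (⌈x j⌉ : ℝ) with hx'
    rw [hCeq] at hxC
    obtain ⟨hx0, hxd⟩ := hxC
    have hle : ∀ j, x j ≤ x' j := by
      intro j
      simp only [hx']
      split
      · exact le_refl _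
      · exact Int.le_ceil _
    have hx'0 : ∀ j, 0 ≤ x' j := fun j => le_trans (hx0 j) (hle j)
    refine ⟨x', ⟨?_, ?_⟩, ?_⟩
    · rw [hCeq]
      refine ⟨hx'0, fun i => le_trans (hxd i) ?_⟩
      apply Finset.sum_le_sum
      intro j _
      exact mul_le_mul_of_nonneg_left (hle j) (hM i j)
    · intro j
      simp only [hx']
      split
      · rename_i h
        obtain ⟨z, hz⟩ := hyInt ⟨(j : ℕ), h⟩
        refine ⟨z, ?_⟩
        convert hz using 2
        exact Fin.ext rfl
      · exact ⟨⌈x j⌉, rfl⟩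
    · funext i
      simp only [hx']
      rw [if_pos (show ((Fin.castLE htn.le i : Fin n) : ℕ) < t from i.isLt)]
end
end

section
/- Let 𝓢 be an infinite family of subsets of ℕ^n. Then there exist two distinct members S₁, S₂ ∈ 𝓢 such that {x ∈ ℕ^n : ∃ s₁ ∈ S₁ with x ≤ s₁} ⊆ {x ∈ ℕ^n : ∃ s₂ ∈ S₂ with x ≤ s₂}, where ≤ denotes the componentwise order on ℕ^n. -/
/-!
A lower set `D` of `ℕ × α` is the antitone sequence of its slices `D.slice k ⊆ α`. If the lower
sets of `α` are well-quasi-ordered, this sequence stabilises, so `D` is determined by its minimal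
slice together with the finite list of slices before it. Comparing minimal slices
(well-quasi-ordered by assumption) and the lists (well-quasi-ordered by Higman's lemma) shows that
the lower sets of `ℕ × α` are well-quasi-ordered as well. By induction on `n` the lower sets of
`ℕⁿ` are well-quasi-ordered under inclusion; apply this to the lower closures of an injective
sequence of members of `𝒮`.
-/

open List

theorem List.SublistForall₂.exists_le_getElem {α β : Type*} {R : α → β → Prop}
    {l₁ : List α} {l₂ : List β} (h : SublistForall₂ R l₁ l₂) {k : ℕ} (hk : k < l₁.length) :
    ∃ k' : ℕ, ∃ hk' : k' < l₂.length, k ≤ k' ∧ R l₁[k] l₂[k'] := by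
  induction h generalizing k with
  | nil => simp at hk
  | cons hr _ ih =>
    cases k with
    | zero => exact ⟨0, by simp, le_rfl, hr⟩
    | succ k =>
      obtain ⟨k', hk', hle, hR⟩ := ih (Nat.lt_of_succ_lt_succ hk)
      exact ⟨k' + 1, Nat.succ_lt_succ hk', Nat.succ_le_succ hle, hR⟩
  | cons_right _ ih =>
    obtain ⟨k', hk', hle, hR⟩ := ih hk
    exact ⟨k' + 1, Nat.succ_lt_succ hk', hle.trans k'.le_succ, hR⟩

theorem wellQuasiOrdered_sublistForall₂ {β : Type*} [Preorder β] [WellQuasiOrderedLE β] :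
    WellQuasiOrdered (SublistForall₂ (· ≤ ·) : List β → List β → Prop) := by
  have := (Set.isPWO_of_wellQuasiOrderedLE (Set.univ : Set β)).partiallyWellOrderedOn_sublistForall₂
  simp only [Set.mem_univ, implies_true, Set.ofPred_true] at this
  exact Set.partiallyWellOrderedOn_univ_iff.1 this

namespace LowerSet

variable {α : Type*} [Preorder α]

def slice (D : LowerSet (ℕ × α)) (k : ℕ) : LowerSet α :=
  ⟨{a | (k, a) ∈ D}, fun _ _ hba ha => D.lower (Prod.mk_le_mk.2 ⟨le_rfl, hba⟩) ha⟩

theorem antitone_slice (D : LowerSet (ℕ × α)) : Antitone D.slice :=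
  fun _ _ hkl _ ha => D.lower (Prod.mk_le_mk.2 ⟨hkl, le_rfl⟩) ha

theorem exists_slice_le [WellFoundedLT (LowerSet α)] (D : LowerSet (ℕ × α)) :
    ∃ N, ∀ k, D.slice N ≤ D.slice k := by
  obtain ⟨N, hN⟩ := WellFoundedLT.antitone_chain_condition D.antitone_slice
  refine ⟨N, fun k => ?_⟩
  rcases le_total k N with hkN | hNk
  · exact D.antitone_slice hkN
  · exact (hN k hNk).le

noncomputable def sliceCode [WellFoundedLT (LowerSet α)] (D : LowerSet (ℕ × α)) :
    LowerSet α × List (LowerSet α) :=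
  (D.slice D.exists_slice_le.choose, (range D.exists_slice_le.choose).map D.slice)

theorem le_of_sliceCode_le [WellFoundedLT (LowerSet α)] {D E : LowerSet (ℕ × α)}
    (hmin : (sliceCode D).1 ≤ (sliceCode E).1)
    (hinit : SublistForall₂ (· ≤ ·) (sliceCode D).2 (sliceCode E).2) : D ≤ E := by
  rintro ⟨k, a⟩ ha
  by_cases hk : k < D.exists_slice_le.choose
  · obtain ⟨k', hk', hkk', hle⟩ := hinit.exists_le_getElem (by simpa [sliceCode] using hk)
    simp only [sliceCode, getElem_map, getElem_range] at hle
    exact E.antitone_slice hkk' (hle ha)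
  · exact E.exists_slice_le.choose_spec k (hmin (D.antitone_slice (not_lt.1 hk) ha))

theorem wellQuasiOrderedLE_nat_prod [WellQuasiOrderedLE (LowerSet α)] :
    WellQuasiOrderedLE (LowerSet (ℕ × α)) where
  wqo f := by
    obtain ⟨i, j, hij, hmin, hinit⟩ :=
      (wellQuasiOrdered_le.prod wellQuasiOrdered_sublistForall₂) (sliceCode ∘ f)
    exact ⟨i, j, hij, le_of_sliceCode_le hmin hinit⟩

instance wellQuasiOrderedLE_fin_arrow_nat (n : ℕ) :
    WellQuasiOrderedLE (LowerSet (Fin n → ℕ)) := by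
  induction n with
  | zero => exact Finite.to_wellQuasiOrderedLE
  | succ n ih =>
    exact (map (Fin.snocOrderIso fun _ => ℕ)).wellQuasiOrderedLE_iff.1 wellQuasiOrderedLE_nat_prod

end LowerSet

/-- Lemma: among infinitely many subsets of ℕⁿ, two distinct ones have comparable
downward closures (with respect to the componentwise order). -/
theorem exists_comparable_down_closures {n : ℕ}
    (𝒮 : Set (Set (Fin n → ℕ))) (hinf : 𝒮.Infinite) :
    ∃ S₁ ∈ 𝒮, ∃ S₂ ∈ 𝒮, S₁ ≠ S₂ ∧
      {x : Fin n → ℕ | ∃ s₁ ∈ S₁, x ≤ s₁} ⊆ {x : Fin n → ℕ | ∃ s₂ ∈ S₂, x ≤ s₂} := by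
  let S := hinf.natEmbedding
  obtain ⟨i, j, hij, hle⟩ := wellQuasiOrdered_le fun m => lowerClosure (S m : Set (Fin n → ℕ))
  exact ⟨S i, (S i).2, S j, (S j).2, fun h => hij.ne (S.injective (Subtype.ext h)), hle⟩
end

section
/- Let S = {x ∈ ℝ² : x₁² + x₂² ≤ 1, x₂ ≥ 0} be the upper half-disk. Then the valid inequality x₁ ≤ 1 is a finitely-irredundant inequality (FII) of S, even though the face S ∩ {x : x₁ = 1} = {(1,0)} is not an inclusionwise-maximal proper face of S (so x₁ ≤ 1 is not a facet-defining inequality of S). -/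
noncomputable section

/-- A valid inequality α·x ≤ β of a convex set S is a finitely-irredundant inequality (FII)
of S if no finite collection of valid inequalities of S, none of which is a positive scalar
multiple of (α, β), implies it. -/
def IsFII {n : ℕ} (S : Set (Fin n → ℝ)) (α : Fin n → ℝ) (β : ℝ) : Prop :=
  (S ⊆ {x | ∑ i, α i * x i ≤ β}) ∧
  ∀ (k : ℕ) (a : Fin k → (Fin n → ℝ)) (b : Fin k → ℝ),
    (∀ i, S ⊆ {x : Fin n → ℝ | ∑ j, a i j * x j ≤ b i}) →
    (∀ i, ¬ ∃ c : ℝ, 0 < c ∧ a i = c • α ∧ b i = c * β) →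
    ¬ ({x : Fin n → ℝ | ∀ i, ∑ j, a i j * x j ≤ b i} ⊆ {x | ∑ j, α j * x j ≤ β})

/-- A face of a convex set: a convex extreme subset. -/
def IsFace {E : Type*} [AddCommGroup E] [Module ℝ E] (S F : Set E) : Prop :=
  Convex ℝ F ∧ IsExtreme ℝ S F

/-- A facet of a convex set: an inclusionwise-maximal proper face. -/
def IsFacet {E : Type*} [AddCommGroup E] [Module ℝ E] (S F : Set E) : Prop :=
  IsFace S F ∧ F ≠ S ∧ ∀ F' : Set E, IsFace S F' → F' ≠ S → F ⊆ F' → F' = F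

/-- α·x ≤ β is a facet-defining inequality of P. -/
def FacetDefining {n : ℕ} (P : Set (Fin n → ℝ)) (α : Fin n → ℝ) (β : ℝ) : Prop :=
  (P ⊆ {x | ∑ i, α i * x i ≤ β}) ∧ IsFacet P (P ∩ {x | ∑ i, α i * x i = β})

/-- The upper half-disk in ℝ². -/
def halfDisk : Set (Fin 2 → ℝ) := {x | x 0 ^ 2 + x 1 ^ 2 ≤ 1 ∧ 0 ≤ x 1}

/-!
Along the curve `t ↦ (1 + t ^ 2, t)`, which violates `x 0 ≤ 1` for `t ≠ 0`, every valid inequality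
`a ⬝ x ≤ b` of the half-disk other than a positive multiple of `x 0 ≤ 1` holds for small `t > 0`.
If it is slack at `(1, 0)` this is continuity. If it is tight there, testing it on the points
`(1 - u ^ 2, u)` of the half-disk puts `a` in the normal cone `a 0 ≥ 0, a 1 ≤ 0`; then
`a ⬝ (1 + t ^ 2, t) - b = t (a 1 + a 0 t)` is negative for small `t` when `a 1 < 0`, while `a 1 = 0`
forces `a = 0`, the excluded multiples aside. Finitely many inequalities therefore hold simultaneously at some point of the
curve. On the other hand the face `{(1, 0)}` is not a facet: it lies strictly inside the proper
exposed face `[-1, 1] × {0}`.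
-/

open Filter Topology

theorem IsExposed.isFace {E : Type*} [AddCommGroup E] [Module ℝ E] [TopologicalSpace E]
    {A B : Set E} (hAB : IsExposed ℝ A B) (hA : Convex ℝ A) : IsFace A B :=
  ⟨hAB.convex hA, hAB.isExtreme⟩

theorem isFII_of_eventually {n : ℕ} {S : Set (Fin n → ℝ)} {α : Fin n → ℝ} {β : ℝ}
    {ι : Type*} {l : Filter ι} [l.NeBot] (γ : ι → Fin n → ℝ)
    (hS : S ⊆ {x | ∑ i, α i * x i ≤ β})
    (hγ : ∀ᶠ t in l, β < ∑ i, α i * γ t i)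
    (hsat : ∀ (a : Fin n → ℝ) (b : ℝ), S ⊆ {x | ∑ j, a j * x j ≤ b} →
      (¬ ∃ c : ℝ, 0 < c ∧ a = c • α ∧ b = c * β) → ∀ᶠ t in l, ∑ j, a j * γ t j ≤ b) :
    IsFII S α β := by
  refine ⟨hS, fun k a b hvalid hnot himp => ?_⟩
  obtain ⟨t, hsat_t, hescape⟩ :=
    ((eventually_all.2 fun i => hsat (a i) (b i) (hvalid i) (hnot i)).and hγ).exists
  exact (himp hsat_t).not_gt hescape

theorem convex_halfDisk : Convex ℝ halfDisk := by
  rintro x ⟨hx, hx1⟩ y ⟨hy, hy1⟩ s t hs ht hst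
  refine ⟨?_, ?_⟩
  · simp only [Pi.add_apply, Pi.smul_apply, smul_eq_mul]
    obtain rfl : t = 1 - s := by linarith
    nlinarith [mul_le_mul_of_nonneg_left hx hs, mul_le_mul_of_nonneg_left hy ht,
      mul_nonneg (mul_nonneg hs ht) (add_nonneg (sq_nonneg (x 0 - y 0)) (sq_nonneg (x 1 - y 1)))]
  · simp only [Pi.add_apply, Pi.smul_apply, smul_eq_mul]
    positivity

theorem halfDisk_subset_fst_le_one : halfDisk ⊆ {x | ∑ i, (![1, 0] : Fin 2 → ℝ) i * x i ≤ 1} := by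
  rintro x ⟨hx, -⟩
  simp only [Set.mem_ofPred_eq, Fin.sum_univ_two, Matrix.cons_val_zero, Matrix.cons_val_one]
  nlinarith [sq_nonneg (x 0 - 1), sq_nonneg (x 1)]

theorem halfDisk_inter_fst_eq_one :
    halfDisk ∩ {x | ∑ i, (![1, 0] : Fin 2 → ℝ) i * x i = 1} = {![1, 0]} := by
  ext x
  simp only [halfDisk, Set.mem_inter_iff, Set.mem_ofPred_eq, Set.mem_singleton_iff,
    Fin.sum_univ_two, Matrix.cons_val_zero, Matrix.cons_val_one]
  constructor
  · rintro ⟨⟨hx, -⟩, hx0⟩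
    have hx0 : x 0 = 1 := by linarith
    have hx1 : x 1 = 0 := by nlinarith
    ext j
    fin_cases j <;> simp [hx0, hx1]
  · rintro rfl
    norm_num

theorem isExposed_halfDisk_diameter : IsExposed ℝ halfDisk {x | x 0 ^ 2 ≤ 1 ∧ x 1 = 0} := by
  refine fun _ => ⟨-ContinuousLinearMap.proj 1, ?_⟩
  ext x
  simp only [halfDisk, Set.mem_ofPred_eq, neg_apply, ContinuousLinearMap.proj_apply, neg_le_neg_iff]
  constructor
  · rintro ⟨hx, hx1⟩
    exact ⟨⟨by rw [hx1]; linarith, hx1.ge⟩, fun y hy => hx1 ▸ hy.2⟩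
  · rintro ⟨⟨hx, hx1⟩, hmin⟩
    have hx1 : x 1 = 0 := le_antisymm (hmin 0 (by simp)) hx1
    exact ⟨by nlinarith, hx1⟩

theorem not_isFacet_halfDisk_singleton : ¬ IsFacet halfDisk {![1, 0]} := by
  rintro ⟨-, -, hmax⟩
  have hproper : {x : Fin 2 → ℝ | x 0 ^ 2 ≤ 1 ∧ x 1 = 0} ≠ halfDisk := by
    intro h
    have h01 : (![0, 1] : Fin 2 → ℝ) ∈ halfDisk := by norm_num [halfDisk]
    rw [← h] at h01
    norm_num at h01
  have h10 : {![1, 0]} ⊆ {x : Fin 2 → ℝ | x 0 ^ 2 ≤ 1 ∧ x 1 = 0} := by simp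
  have h00 : (0 : Fin 2 → ℝ) ∈ {x : Fin 2 → ℝ | x 0 ^ 2 ≤ 1 ∧ x 1 = 0} := by simp
  rw [hmax _ (isExposed_halfDisk_diameter.isFace convex_halfDisk) hproper h10] at h00
  simpa using congrFun h00 0

theorem halfDisk_normal_of_valid_of_tight (a : Fin 2 → ℝ) (b : ℝ)
    (hvalid : halfDisk ⊆ {x | ∑ j, a j * x j ≤ b}) (htight : a 0 = b) : 0 ≤ a 0 ∧ a 1 ≤ 0 := by
  have hvalid' : ∀ x ∈ halfDisk, a 0 * x 0 + a 1 * x 1 ≤ b := fun x hx => by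
    simpa [Fin.sum_univ_two] using hvalid hx
  have ha0 : 0 ≤ a 0 := by simpa [htight] using hvalid' 0 (by simp [halfDisk])
  refine ⟨ha0, ?_⟩
  have hle : ∀ᶠ u in 𝓝[>] (0 : ℝ), a 1 ≤ a 0 * u := by
    filter_upwards [Ioo_mem_nhdsGT one_pos] with u ⟨hu0, hu1⟩
    have hu : (![1 - u ^ 2, u] : Fin 2 → ℝ) ∈ halfDisk := by
      have hu2 : u ^ 2 ≤ 1 := by nlinarith
      refine ⟨?_, hu0.le⟩
      simp only [Matrix.cons_val_zero, Matrix.cons_val_one]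
      nlinarith [mul_le_mul_of_nonneg_left hu2 (sq_nonneg u)]
    have := hvalid' _ hu
    simp only [Matrix.cons_val_zero, Matrix.cons_val_one] at this
    exact le_of_mul_le_mul_right (by nlinarith) hu0
  have hlim : Tendsto (fun u => a 0 * u) (𝓝[>] 0) (𝓝 0) := by
    simpa using ((continuous_const_mul (a 0)).tendsto 0).mono_left nhdsWithin_le_nhds
  exact ge_of_tendsto hlim hle

theorem halfDisk_eventually_valid_above (a : Fin 2 → ℝ) (b : ℝ)
    (hvalid : halfDisk ⊆ {x | ∑ j, a j * x j ≤ b})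
    (hne : ¬ ∃ c : ℝ, 0 < c ∧ a = c • ![1, 0] ∧ b = c * 1) :
    ∀ᶠ t in 𝓝[>] (0 : ℝ), ∑ j, a j * (![1 + t ^ 2, t] : Fin 2 → ℝ) j ≤ b := by
  simp only [Fin.sum_univ_two, Matrix.cons_val_zero, Matrix.cons_val_one]
  have h10 : a 0 ≤ b := by
    simpa [Fin.sum_univ_two] using hvalid (show ![1, 0] ∈ halfDisk by simp [halfDisk])
  rcases h10.lt_or_eq with hslack | htight
  · have hlim : Tendsto (fun t => a 0 * (1 + t ^ 2) + a 1 * t) (𝓝[>] 0) (𝓝 (a 0)) := by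
      have hcont : Continuous fun t : ℝ => a 0 * (1 + t ^ 2) + a 1 * t := by fun_prop
      simpa using (hcont.tendsto 0).mono_left nhdsWithin_le_nhds
    exact (hlim.eventually_lt_const hslack).mono fun _ => le_of_lt
  obtain ⟨ha0, ha1⟩ := halfDisk_normal_of_valid_of_tight a b hvalid htight
  rcases ha1.lt_or_eq with ha1 | ha1
  · have hlim : Tendsto (fun t => a 1 + a 0 * t) (𝓝[>] 0) (𝓝 (a 1)) := by
      have hcont : Continuous fun t : ℝ => a 1 + a 0 * t := by fun_prop
      simpa using (hcont.tendsto 0).mono_left nhdsWithin_le_nhds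
    filter_upwards [hlim.eventually_lt_const ha1, self_mem_nhdsWithin] with t ht (ht0 : 0 < t)
    nlinarith [mul_neg_of_pos_of_neg ht0 ht]
  · have ha0 : a 0 = 0 := by
      refine by_contra fun h => hne ⟨a 0, lt_of_le_of_ne ha0 (Ne.symm h), ?_, by simp [htight]⟩
      ext j
      fin_cases j <;> simp [ha1]
    filter_upwards with t
    simp [ha0, ha1, ← htight]

/-- Example: for the half-disk S, the inequality x₁ ≤ 1 is a FII of S, even though the
face S ∩ {x : x₁ = 1} is the single point (1,0), which is not a facet of S (so x₁ ≤ 1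
is not facet-defining). -/
theorem halfDisk_FII_not_facetDefining :
    IsFII halfDisk ![1, 0] 1 ∧
    halfDisk ∩ {x | ∑ i, (![1, 0] : Fin 2 → ℝ) i * x i = 1} = {![1, 0]} ∧
    ¬ IsFacet halfDisk (halfDisk ∩ {x | ∑ i, (![1, 0] : Fin 2 → ℝ) i * x i = 1}) ∧
    ¬ FacetDefining halfDisk ![1, 0] 1 := by
  have hescape : ∀ᶠ t in 𝓝[>] (0 : ℝ), 1 < ∑ i, (![1, 0] : Fin 2 → ℝ) i * ![1 + t ^ 2, t] i := by
    filter_upwards [self_mem_nhdsWithin] with t (ht : 0 < t)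
    simp only [Fin.sum_univ_two, Matrix.cons_val_zero, Matrix.cons_val_one]
    nlinarith
  have hnotFacet := halfDisk_inter_fst_eq_one ▸ not_isFacet_halfDisk_singleton
  exact ⟨isFII_of_eventually _ halfDisk_subset_fst_le_one hescape halfDisk_eventually_valid_above,
    halfDisk_inter_fst_eq_one, hnotFacet, fun h => hnotFacet h.2⟩
end
end
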